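/- arXiv:2405.03576 — 9 statements merged into one kernel-verified Lean document; each statement's English description precedes it below -/
import Mathlib

section
/- Let M be a matroid on a finite ground set E and let w : E → ℝ satisfy the tropical circuit condition. Then for every r ∈ ℝ the superlevel set F^w_r = { i ∈ E : w(i) ≥ r } is a flat of M. -/
open Set

/-- A circuit of a matroid: a minimal dependent set. -/
def MatroidCircuit {α : Type*} (M : Matroid α) (C : Set α) : Prop :=
  M.Dep C ∧ ∀ D ⊆ C, M.Dep D → D = C

/-- `w` satisfies the tropical circuit condition (i.e. lies in the support of the
Bergman fan of `M`): on every circuit the minimum of `w` is attained by at least two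
distinct elements. -/
def TropCircuitCond {α : Type*} (M : Matroid α) (w : α → ℝ) : Prop :=
  ∀ C, MatroidCircuit M C →
    ∃ x ∈ C, ∃ y ∈ C, x ≠ y ∧ w x = w y ∧ ∀ c ∈ C, w x ≤ w c

/-- Every dependent set in a matroid on a finite type contains a circuit. -/
lemma exists_circuit_subset {α : Type*} [Fintype α] (M : Matroid α) :
    ∀ D, M.Dep D → ∃ C ⊆ D, MatroidCircuit M C := by
  have key : ∀ n : ℕ, ∀ D : Set α, D.ncard ≤ n → M.Dep D →
      ∃ C ⊆ D, MatroidCircuit M C := by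
    intro n
    induction n with
    | zero =>
      intro D hcard hD
      have : D = ∅ := by
        rw [← Set.ncard_eq_zero D.toFinite]; omega
      subst this
      exact absurd M.empty_indep hD.not_indep
    | succ n ih =>
      intro D hcard hD
      by_cases hmin : ∀ D' ⊆ D, M.Dep D' → D' = D
      · exact ⟨D, subset_rfl, hD, hmin⟩
      · push_neg at hmin
        obtain ⟨D', hD'sub, hD'dep, hne⟩ := hmin
        have hss : D' ⊂ D := hD'sub.ssubset_of_ne hne
        have : D'.ncard ≤ n := by
          have := Set.ncard_lt_ncard hss D.toFinite
          omega
        obtain ⟨C, hCsub, hC⟩ := ih D' this hD'dep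
        exact ⟨C, hCsub.trans hD'sub, hC⟩
  exact fun D hD => key D.ncard D le_rfl hD

/-- if `w` satisfies the tropical circuit condition, then every
superlevel set `{i | w i ≥ r}` is a flat of `M`. The finite ground set `E` is
formalized as a finite type `α`, with `M.E = univ`. -/
theorem superlevel_set_flat {α : Type*} [Fintype α] (M : Matroid α)
    (hE : M.E = Set.univ) (w : α → ℝ) (hw : TropCircuitCond M w) (r : ℝ) :
    M.IsFlat {i | r ≤ w i} := by
  constructor
  · intro I X hIF hIX x hxX
    show r ≤ w x
    by_contra hx
    push_neg at hx
    have hxI : x ∉ I := by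
      intro hxI
      exact absurd (hIF.subset hxI) (not_le.mpr hx)
    have hxcl : x ∈ M.closure I := hIX.subset_closure hxX
    have hdep : M.Dep (insert x I) :=
      hIF.indep.insert_dep_iff.mpr ⟨hxcl, hxI⟩
    obtain ⟨C, hCsub, hC⟩ := exists_circuit_subset M _ hdep
    have hxC : x ∈ C := by
      by_contra hxC
      have : C ⊆ I := fun c hc => ((hCsub hc).resolve_left (fun h => hxC (h ▸ hc)))
      exact absurd (hIF.indep.subset this) hC.1.not_indep
    obtain ⟨a, haC, b, hbC, hab, hwab, hmin⟩ := hw C hC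
    rcases eq_or_ne a x with h | h
    · subst h
      have hbmin : r ≤ w b := hIF.subset ((hCsub hbC).resolve_left hab.symm)
      have : w a ≤ w a := le_refl _
      linarith [hwab ▸ hbmin]
    · have hamin : r ≤ w a := hIF.subset ((hCsub haC).resolve_left h)
      linarith [hmin x hxC]
  · rw [hE]; exact subset_univ _
end

section
/- Let M be a matroid on a finite ground set E and let (F_r)_{r ∈ ℝ} be a family of flats of M that is antitone (F_s ⊆ F_r whenever r ≤ s), with F_r = E for all sufficiently small r and F_r = ∅ for all sufficiently large r. Define w : E → ℝ by w(i) = sup{ r ∈ ℝ : i ∈ F_r }. Then w satisfies the tropical circuit condition. -/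
open Set

/-- an antitone family of flats `(F r)` with `F r = E` for small `r`
and `F r = ∅` for large `r` determines, via `w i = sup {r | i ∈ F r}`, a function
satisfying the tropical circuit condition. -/
theorem filtration_gives_bergman_point {α : Type*} [Fintype α] (M : Matroid α)
    (hE : M.E = Set.univ) (F : ℝ → Set α)
    (hflat : ∀ r : ℝ, M.IsFlat (F r))
    (hanti : ∀ ⦃r s : ℝ⦄, r ≤ s → F s ⊆ F r)
    (hsmall : ∃ r₀ : ℝ, ∀ r ≤ r₀, F r = M.E)
    (hlarge : ∃ r₁ : ℝ, ∀ r : ℝ, r₁ ≤ r → F r = ∅) :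
    TropCircuitCond M (fun i => sSup {r : ℝ | i ∈ F r}) := by
  obtain ⟨r₀, hr₀⟩ := hsmall
  obtain ⟨r₁, hr₁⟩ := hlarge
  set w : α → ℝ := fun i => sSup {r : ℝ | i ∈ F r} with hw
  -- basic facts about w
  have hne : ∀ i : α, ({r : ℝ | i ∈ F r}).Nonempty := by
    intro i
    exact ⟨r₀, by simp [hr₀ r₀ le_rfl, hE]⟩
  have hbdd : ∀ i : α, BddAbove {r : ℝ | i ∈ F r} := by
    intro i
    refine ⟨r₁, fun r hr => ?_⟩
    by_contra h
    push_neg at h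
    simp only [mem_setOf_eq, hr₁ r h.le] at hr
    exact hr
  have hle : ∀ (i : α) (r : ℝ), i ∈ F r → r ≤ w i := fun i r hr =>
    le_csSup (hbdd i) hr
  have hmem : ∀ (i : α) (r : ℝ), r < w i → i ∈ F r := by
    intro i r hr
    obtain ⟨s, hs, hrs⟩ := exists_lt_of_lt_csSup (hne i) hr
    exact hanti hrs.le hs
  intro C ⟨hCdep, hCmin⟩
  have hCE : C ⊆ M.E := hCdep.subset_ground
  -- for each x ∈ C, C \ {x} is independent and x ∈ closure (C \ {x})
  have hkey : ∀ x ∈ C, x ∈ M.closure (C \ {x}) := by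
    intro x hx
    have hIndep : M.Indep (C \ {x}) := by
      rw [Matroid.indep_iff_not_dep]
      refine ⟨fun hd => ?_, (diff_subset.trans hCE)⟩
      have := hCmin _ diff_subset hd
      have : x ∈ C \ {x} := by rw [this]; exact hx
      simp at this
    rw [hIndep.mem_closure_iff]
    left
    rwa [insert_diff_singleton, insert_eq_of_mem hx]
  -- C nonempty and finite
  have hCfin : C.Finite := Set.toFinite C
  have hCne : C.Nonempty := hCdep.nonempty
  obtain ⟨x, hxC, hxmin⟩ := Set.exists_min_image C w hCfin hCne
  -- flats absorb closure: key contradiction tool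
  have habsorb : ∀ (r : ℝ) (z : α), z ∈ C → (∀ c ∈ C \ {z}, c ∈ F r) → z ∈ F r := by
    intro r z hz h
    have h1 : C \ {z} ⊆ F r := h
    have := (M.closure_subset_closure h1).trans_eq (hflat r).closure
    exact this (hkey z hz)
  -- C \ {x} is nonempty
  have hCx : (C \ {x}).Nonempty := by
    rcases Set.eq_empty_or_nonempty (C \ {x}) with h | h
    · exfalso
      have hx' : x ∈ F r₁ := by
        refine habsorb r₁ x hxC ?_
        intro c hc
        rw [h] at hc
        exact absurd hc (notMem_empty c)
      rw [hr₁ r₁ le_rfl] at hx'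
      exact hx'
    · exact h
  obtain ⟨y, hyC, hymin⟩ := Set.exists_min_image (C \ {x}) w hCfin.diff hCx
  refine ⟨x, hxC, y, hyC.1, fun h => hyC.2 (h ▸ rfl), ?_, hxmin⟩
  have hxy : w x ≤ w y := hxmin y hyC.1
  rcases eq_or_lt_of_le hxy with h | h
  · exact h
  · exfalso
    set r := (w x + w y) / 2 with hr
    have h1 : w x < r := by rw [hr]; linarith
    have h2 : r < w y := by rw [hr]; linarith
    have hxF : x ∈ F r := by
      refine habsorb r x hxC ?_
      intro c hc
      exact hmem c r (lt_of_lt_of_le h2 (hymin c hc))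
    exact absurd (hle x r hxF) (not_le.mpr h1)
end

section
/- Let M be a finite loopless matroid on ground set E, let B be a basis of M, and let a : B → ℝ. Define φ_B(a) : E → ℝ by φ_B(a)(e) = a(e) for e ∈ B and φ_B(a)(e) = min{ a(c) : c ∈ C(e,B), c ≠ e } for e ∉ B. Then φ_B(a) satisfies the tropical circuit condition (i.e., φ_B(a) lies in the Bergman fan of M), and φ_B(a) agrees with a on B, so that the projection onto the B-coordinates is a left inverse of φ_B. -/
open Set

/-- The fundamental circuit of `e` with respect to a basis `B`: the unique circuit
contained in `B ∪ {e}` (expressed as an intersection, which equals that circuit by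
uniqueness). -/
def fundCircuit {α : Type*} (M : Matroid α) (B : Set α) (e : α) : Set α :=
  ⋂₀ {C | MatroidCircuit M C ∧ e ∈ C ∧ C ⊆ insert e B}

open Classical in
/-- The piecewise-linear section `φ_B` : `φ_B(a)(e) = a e` for `e ∈ B` and
`φ_B(a)(e) = min { a c : c ∈ C(e,B), c ≠ e }` for `e ∉ B`. -/
noncomputable def phiB {α : Type*} (M : Matroid α) (B : Set α) (a : α → ℝ) : α → ℝ :=
  fun e => if e ∈ B then a e else sInf (a '' (fundCircuit M B e \ {e}))

section Aux

variable {α : Type*} [Fintype α] {M : Matroid α}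

lemma dep_or_indep (hE : M.E = Set.univ) (D : Set α) : M.Dep D ∨ M.Indep D := by
  by_cases h : M.Indep D
  · exact Or.inr h
  · exact Or.inl ⟨h, by rw [hE]; exact subset_univ _⟩

lemma exists_circuit_subset_s2 (hE : M.E = Set.univ) {D : Set α} (hD : M.Dep D) :
    ∃ C ⊆ D, MatroidCircuit M C := by
  obtain ⟨C, hC, hmin⟩ : ∃ C ∈ {D' | D' ⊆ D ∧ M.Dep D'},
      ∀ D' ∈ {D' | D' ⊆ D ∧ M.Dep D'}, id D' ≤ id C → id C = id D' := by
    obtain ⟨C, hC⟩ := Set.Finite.exists_minimal (s := {D' | D' ⊆ D ∧ M.Dep D'})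
      (Set.toFinite _) ⟨D, Subset.rfl, hD⟩
    exact ⟨C, hC.prop, fun D' h1 h2 => (hC.eq_of_le h1 h2).symm⟩
  refine ⟨C, hC.1, hC.2, fun D' hD'C hD' => ?_⟩
  exact (hmin D' ⟨hD'C.trans hC.1, hD'⟩ hD'C).symm

lemma circuit_diff_indep (hE : M.E = Set.univ) {C : Set α} (hC : MatroidCircuit M C)
    {x : α} (hx : x ∈ C) : M.Indep (C \ {x}) := by
  rcases dep_or_indep hE (C \ {x}) with h | h
  · exfalso
    have heq := hC.2 _ diff_subset h
    rw [← heq] at hx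
    exact hx.2 rfl
  · exact h

lemma circuit_mem_closure_diff (hE : M.E = Set.univ) {C : Set α} (hC : MatroidCircuit M C)
    {x : α} (hx : x ∈ C) : x ∈ M.closure (C \ {x}) := by
  have hI := circuit_diff_indep hE hC hx
  rw [hI.mem_closure_iff]
  left
  rw [Set.insert_diff_singleton, Set.insert_eq_of_mem hx]
  exact hC.1

/-- Key uniqueness step: if `S₁, S₂ ⊆ B` with `e ∈ cl S₁ ∩ cl S₂`, `e ∉ B`, and `S₁` is
minimal (no element can be dropped), then `S₁ ⊆ S₂`. -/
lemma minimal_spanning_subset (hE : M.E = Set.univ) {B : Set α} (hB : M.IsBase B)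
    {e : α} (heB : e ∉ B) {S₁ S₂ : Set α} (hS₁ : S₁ ⊆ B) (hS₂ : S₂ ⊆ B)
    (he₁ : e ∈ M.closure S₁) (he₂ : e ∈ M.closure S₂)
    (hmin : ∀ x ∈ S₁, e ∉ M.closure (S₁ \ {x})) : S₁ ⊆ S₂ := by
  intro x hx
  by_contra hxS₂
  have hxB : x ∈ B := hS₁ hx
  -- e ∈ cl (insert x (S₁ \ {x})) \ cl (S₁ \ {x})
  have h1 : e ∈ M.closure (insert x (S₁ \ {x})) \ M.closure (S₁ \ {x}) := by
    rw [Set.insert_diff_singleton, Set.insert_eq_of_mem hx]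
    exact ⟨he₁, hmin x hx⟩
  have h2 := Matroid.closure_exchange h1
  -- x ∈ cl (insert e (S₁ \ {x}))
  have hx1 : x ∈ M.closure (insert e (S₁ \ {x})) := h2.1
  set X := (S₁ ∪ S₂) \ {x} with hX
  have hSX : S₁ \ {x} ⊆ X := diff_subset_diff_left subset_union_left
  have hS₂X : S₂ ⊆ X := subset_diff_singleton subset_union_right hxS₂
  have heX : e ∈ M.closure X := M.closure_subset_closure hS₂X he₂
  have hx2 : x ∈ M.closure X := by
    have : x ∈ M.closure (insert e X) :=
      M.closure_subset_closure (insert_subset_insert hSX) hx1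
    rwa [Matroid.closure_insert_eq_of_mem_closure heX] at this
  -- contradiction with independence of S₁ ∪ S₂ ⊆ B
  have hXB : X ⊆ B := diff_subset.trans (union_subset hS₁ hS₂)
  have hXI : M.Indep X := hB.indep.subset hXB
  have hxX : x ∉ X := fun h => h.2 rfl
  rw [hXI.mem_closure_iff_of_notMem hxX] at hx2
  have : M.Indep (insert x X) := hB.indep.subset (insert_subset hxB hXB)
  exact hx2.not_indep this

lemma circuit_unique (hE : M.E = Set.univ) {B : Set α} (hB : M.IsBase B) {e : α} (heB : e ∉ B)
    {C₁ C₂ : Set α} (h₁ : MatroidCircuit M C₁ ∧ e ∈ C₁ ∧ C₁ ⊆ insert e B)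
    (h₂ : MatroidCircuit M C₂ ∧ e ∈ C₂ ∧ C₂ ⊆ insert e B) : C₁ = C₂ := by
  obtain ⟨hC₁, heC₁, hC₁B⟩ := h₁
  obtain ⟨hC₂, heC₂, hC₂B⟩ := h₂
  have key : ∀ C : Set α, MatroidCircuit M C → e ∈ C → C ⊆ insert e B →
      (C \ {e} ⊆ B ∧ e ∈ M.closure (C \ {e}) ∧ ∀ x ∈ C \ {e}, e ∉ M.closure ((C \ {e}) \ {x})) := by
    intro C hC heC hCB
    have hsub : C \ {e} ⊆ B := by
      intro y hy
      rcases hCB hy.1 with h | h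
      · exact absurd h hy.2
      · exact h
    refine ⟨hsub, circuit_mem_closure_diff hE hC heC, fun x hx hecl => ?_⟩
    have hxe : x ≠ e := hx.2
    have hI : M.Indep ((C \ {e}) \ {x}) := hB.indep.subset (diff_subset.trans hsub)
    have heI : e ∉ (C \ {e}) \ {x} := fun h => h.1.2 rfl
    rw [hI.mem_closure_iff_of_notMem heI] at hecl
    have : insert e ((C \ {e}) \ {x}) = C \ {x} := by
      ext y
      simp only [Set.mem_insert_iff, Set.mem_diff, Set.mem_singleton_iff]
      constructor
      · rintro (rfl | ⟨⟨hy, _⟩, hyx⟩)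
        · exact ⟨heC, fun h => hxe h.symm⟩
        · exact ⟨hy, hyx⟩
      · rintro ⟨hy, hyx⟩
        by_cases hye : y = e
        · exact Or.inl hye
        · exact Or.inr ⟨⟨hy, hye⟩, hyx⟩
    rw [this] at hecl
    exact hecl.not_indep (circuit_diff_indep hE hC hx.1)
  obtain ⟨hs₁, hc₁, hm₁⟩ := key C₁ hC₁ heC₁ hC₁B
  obtain ⟨hs₂, hc₂, hm₂⟩ := key C₂ hC₂ heC₂ hC₂B
  have h12 : C₁ \ {e} ⊆ C₂ \ {e} := minimal_spanning_subset hE hB heB hs₁ hs₂ hc₁ hc₂ hm₁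
  have h21 : C₂ \ {e} ⊆ C₁ \ {e} := minimal_spanning_subset hE hB heB hs₂ hs₁ hc₂ hc₁ hm₂
  have : C₁ \ {e} = C₂ \ {e} := Subset.antisymm h12 h21
  calc C₁ = insert e (C₁ \ {e}) := by rw [Set.insert_diff_singleton, Set.insert_eq_of_mem heC₁]
    _ = insert e (C₂ \ {e}) := by rw [this]
    _ = C₂ := by rw [Set.insert_diff_singleton, Set.insert_eq_of_mem heC₂]

lemma fundCircuit_spec (hE : M.E = Set.univ) {B : Set α} (hB : M.IsBase B) {e : α} (heB : e ∉ B) :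
    MatroidCircuit M (fundCircuit M B e) ∧ e ∈ fundCircuit M B e ∧
      fundCircuit M B e ⊆ insert e B := by
  have hdep : M.Dep (insert e B) := hB.insert_dep ⟨by rw [hE]; exact mem_univ _, heB⟩
  obtain ⟨C₀, hC₀sub, hC₀⟩ := exists_circuit_subset_s2 hE hdep
  have heC₀ : e ∈ C₀ := by
    by_contra h
    have : C₀ ⊆ B := fun y hy => (hC₀sub hy).resolve_left (fun h' => h (h' ▸ hy))
    exact hC₀.1.not_indep (hB.indep.subset this)
  have hmem : C₀ ∈ {C | MatroidCircuit M C ∧ e ∈ C ∧ C ⊆ insert e B} := ⟨hC₀, heC₀, hC₀sub⟩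
  have heq : fundCircuit M B e = C₀ := by
    apply Subset.antisymm (sInter_subset_of_mem hmem)
    intro y hy
    refine mem_sInter.mpr fun C hC => ?_
    rwa [circuit_unique hE hB heB hC hmem]
  rw [heq]
  exact ⟨hC₀, heC₀, hC₀sub⟩

/-- The set over which the min defining `φ` is taken, for `e ∉ B`. -/
lemma fundCircuit_diff_subset (hE : M.E = Set.univ) {B : Set α} (hB : M.IsBase B)
    {e : α} (heB : e ∉ B) : fundCircuit M B e \ {e} ⊆ B := by
  intro y hy
  rcases (fundCircuit_spec hE hB heB).2.2 hy.1 with h | h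
  · exact absurd h hy.2
  · exact h

lemma fundCircuit_diff_nonempty (hE : M.E = Set.univ) (hloopless : ∀ e : α, M.Indep {e})
    {B : Set α} (hB : M.IsBase B) {e : α} (heB : e ∉ B) :
    (fundCircuit M B e \ {e}).Nonempty := by
  obtain ⟨hC, heC, _⟩ := fundCircuit_spec hE hB heB
  rw [Set.nonempty_iff_ne_empty]
  intro h
  have : fundCircuit M B e ⊆ {e} := by
    intro y hy
    by_contra hye
    exact absurd (mem_diff_of_mem hy hye) (h ▸ (Set.notMem_empty y))
  have : fundCircuit M B e = {e} := Subset.antisymm this (singleton_subset_iff.mpr heC)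
  exact hC.1.not_indep (this ▸ hloopless e)

lemma mem_closure_fundCircuit (hE : M.E = Set.univ) {B : Set α} (hB : M.IsBase B)
    {e : α} (heB : e ∉ B) : e ∈ M.closure (fundCircuit M B e \ {e}) := by
  obtain ⟨hC, heC, _⟩ := fundCircuit_spec hE hB heB
  exact circuit_mem_closure_diff hE hC heC

/-- Minimality of the fundamental circuit: if `f ∈ cl S` with `S ⊆ B` and `f ∉ B`,
then `C(f,B) \ {f} ⊆ S`. -/
lemma fundCircuit_diff_subset_of_mem_closure (hE : M.E = Set.univ) {B : Set α} (hB : M.IsBase B)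
    {f : α} (hfB : f ∉ B) {S : Set α} (hS : S ⊆ B) (hf : f ∈ M.closure S) :
    fundCircuit M B f \ {f} ⊆ S := by
  have hSI : M.Indep S := hB.indep.subset hS
  have hfS : f ∉ S := fun h => hfB (hS h)
  have hdep : M.Dep (insert f S) := by
    rw [hSI.insert_dep_iff]
    exact ⟨hf, hfS⟩
  obtain ⟨C', hC'sub, hC'⟩ := exists_circuit_subset_s2 hE hdep
  have hfC' : f ∈ C' := by
    by_contra h
    have : C' ⊆ S := fun y hy => (hC'sub hy).resolve_left (fun h' => h (h' ▸ hy))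
    exact hC'.1.not_indep (hSI.subset this)
  have hC'B : C' ⊆ insert f B := hC'sub.trans (insert_subset_insert hS)
  have heq : fundCircuit M B f = C' := by
    obtain ⟨hC₀, heC₀, hC₀B⟩ := fundCircuit_spec hE hB hfB
    exact circuit_unique hE hB hfB ⟨hC₀, heC₀, hC₀B⟩ ⟨hC', hfC', hC'B⟩
  rw [heq]
  intro y hy
  exact (hC'sub hy.1).resolve_left hy.2

open Classical in
lemma phiB_le (hE : M.E = Set.univ) {B : Set α} (hB : M.IsBase B) {e : α} (heB : e ∉ B)
    (a : α → ℝ) {c : α} (hc : c ∈ fundCircuit M B e \ {e}) : phiB M B a e ≤ a c := by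
  rw [phiB, if_neg heB]
  exact csInf_le ((Set.toFinite _).bddBelow) (mem_image_of_mem a hc)

open Classical in
lemma phiB_attained (hE : M.E = Set.univ) (hloopless : ∀ e : α, M.Indep {e})
    {B : Set α} (hB : M.IsBase B) {e : α} (heB : e ∉ B) (a : α → ℝ) :
    ∃ c ∈ fundCircuit M B e \ {e}, phiB M B a e = a c := by
  have hne : (a '' (fundCircuit M B e \ {e})).Nonempty :=
    (fundCircuit_diff_nonempty hE hloopless hB heB).image a
  have := hne.csInf_mem (Set.toFinite _)
  obtain ⟨c, hc, hc'⟩ := this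
  exact ⟨c, hc, by rw [phiB, if_neg heB, hc']⟩

open Classical in
lemma le_phiB (hE : M.E = Set.univ) (hloopless : ∀ e : α, M.Indep {e})
    {B : Set α} (hB : M.IsBase B) {e : α} (heB : e ∉ B) (a : α → ℝ) {lam : ℝ}
    (h : ∀ c ∈ fundCircuit M B e \ {e}, lam ≤ a c) : lam ≤ phiB M B a e := by
  rw [phiB, if_neg heB]
  apply le_csInf ((fundCircuit_diff_nonempty hE hloopless hB heB).image a)
  rintro b ⟨c, hc, rfl⟩
  exact h c hc

/-- Superlevel sets of `φ_B(a)` are closed: if `S` lies in `{φ ≥ λ}` then so does `cl S`. -/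
lemma phiB_superlevel_closed (hE : M.E = Set.univ) (hloopless : ∀ e : α, M.Indep {e})
    {B : Set α} (hB : M.IsBase B) (a : α → ℝ) {lam : ℝ} {S : Set α}
    (hS : ∀ s ∈ S, lam ≤ phiB M B a s) {f : α} (hf : f ∈ M.closure S) :
    lam ≤ phiB M B a f := by
  classical
  set GB : Set α := {e ∈ B | lam ≤ a e} with hGB
  have hGBB : GB ⊆ B := fun e he => he.1
  have hGBE : GB ⊆ M.E := by rw [hE]; exact subset_univ _
  -- S ⊆ cl GB
  have hScl : S ⊆ M.closure GB := by
    intro s hs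
    by_cases hsB : s ∈ B
    · apply M.subset_closure GB hGBE
      refine ⟨hsB, ?_⟩
      have := hS s hs
      rwa [phiB, if_pos hsB] at this
    · have hsub : fundCircuit M B s \ {s} ⊆ GB := by
        intro c hc
        refine ⟨fundCircuit_diff_subset hE hB hsB hc, ?_⟩
        exact le_trans (hS s hs) (phiB_le hE hB hsB a hc)
      exact M.closure_subset_closure hsub (mem_closure_fundCircuit hE hB hsB)
  have hfGB : f ∈ M.closure GB :=
    M.closure_subset_closure_of_subset_closure hScl hf
  by_cases hfB : f ∈ B
  ·
    have hGBI : M.Indep GB := hB.indep.subset hGBB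
    have hfGB' : f ∈ GB := by
      by_contra hfGB'
      rw [hGBI.mem_closure_iff_of_notMem hfGB'] at hfGB
      exact hfGB.not_indep (hB.indep.subset (insert_subset hfB hGBB))
    rw [phiB, if_pos hfB]
    exact hfGB'.2
  · have hsub : fundCircuit M B f \ {f} ⊆ GB :=
      fundCircuit_diff_subset_of_mem_closure hE hB hfB hGBB hfGB
    exact le_phiB hE hloopless hB hfB a (fun c hc => (hsub hc).2)

end Aux

/-- for a finite loopless matroid `M`, a basis `B` and `a : B → ℝ`
(extended arbitrarily to the ground type), `φ_B(a)` satisfies the tropical circuit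
condition, and agrees with `a` on `B` (so the projection to the `B`-coordinates is a
left inverse of `φ_B`). -/
theorem phiB_mem_bergman {α : Type*} [Fintype α] (M : Matroid α)
    (hE : M.E = Set.univ) (hloopless : ∀ e : α, M.Indep {e})
    (B : Set α) (hB : M.IsBase B) (a : α → ℝ) :
    TropCircuitCond M (phiB M B a) ∧ ∀ b ∈ B, phiB M B a b = a b := by
  classical
  set w := phiB M B a with hw
  constructor
  · intro C hC
    -- C is finite and nonempty
    have hCne : C.Nonempty := by
      rw [Set.nonempty_iff_ne_empty]
      rintro rfl
      exact hC.1.not_indep M.empty_indep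
    -- the minimum of w over C is attained
    obtain ⟨x, hxC, hxmin⟩ : ∃ x ∈ C, ∀ c ∈ C, w x ≤ w c := by
      have hne : (w '' C).Nonempty := hCne.image w
      obtain ⟨x, hxC, hx⟩ := hne.csInf_mem (Set.toFinite _)
      exact ⟨x, hxC, fun c hc =>
        hx ▸ csInf_le ((Set.toFinite _).bddBelow) (mem_image_of_mem w hc)⟩
    -- C \ {x} is nonempty
    have hCx : (C \ {x}).Nonempty := by
      rw [Set.nonempty_iff_ne_empty]
      intro h
      have hsub : C ⊆ {x} := fun y hy => by
        by_contra hyx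
        exact absurd (mem_diff_of_mem hy hyx) (h ▸ Set.notMem_empty y)
      have : C = {x} := Subset.antisymm hsub (singleton_subset_iff.mpr hxC)
      exact hC.1.not_indep (this ▸ hloopless x)
    -- minimum of w over C \ {x} is attained at y
    obtain ⟨y, hyC, hymin⟩ : ∃ y ∈ C \ {x}, ∀ c ∈ C \ {x}, w y ≤ w c := by
      have hne : (w '' (C \ {x})).Nonempty := hCx.image w
      obtain ⟨y, hyC, hy⟩ := hne.csInf_mem (Set.toFinite _)
      exact ⟨y, hyC, fun c hc =>
        hy ▸ csInf_le ((Set.toFinite _).bddBelow) (mem_image_of_mem w hc)⟩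
    by_cases hxy : w x = w y
    · exact ⟨x, hxC, y, hyC.1, fun h => hyC.2 h.symm, hxy, hxmin⟩
    · exfalso
      -- unique minimizer: w x < w c for all c ∈ C \ {x}
      have hxcl : x ∈ M.closure (C \ {x}) := circuit_mem_closure_diff hE hC hxC
      have : w y ≤ w x :=
        phiB_superlevel_closed hE hloopless hB a (fun s hs => hymin s hs) hxcl
      exact hxy (le_antisymm (hxmin y hyC.1) this)
  · intro b hb
    show phiB M B a b = a b
    rw [phiB, if_pos hb]
end

section
/- Let M be a finite loopless matroid on ground set E. For every w : E → ℝ, the function Φ_M(w) satisfies the tropical circuit condition; that is, the canonical projection Φ_M maps ℝ^E into the support of the Bergman fan of M. -/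
open Set

/-- The canonical projection `Φ_M` onto the Bergman fan:
`Φ_M(w)(i) = sup { k : i ∈ cl_M { j : w j ≥ k } }`. -/
noncomputable def canonProj {α : Type*} (M : Matroid α) (w : α → ℝ) : α → ℝ :=
  fun i => sSup {k : ℝ | i ∈ M.closure {j | k ≤ w j}}

/-- for a finite loopless matroid, `Φ_M` maps every `w : E → ℝ` into
the support of the Bergman fan. -/
theorem canonProj_mem_bergman {α : Type*} [Fintype α] (M : Matroid α)
    (hE : M.E = Set.univ) (hloopless : ∀ e : α, M.Indep {e}) (w : α → ℝ) :
    TropCircuitCond M (canonProj M w) := by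
  intro C hC
  obtain ⟨hCdep, hCmin⟩ := hC
  have hsub : ∀ X : Set α, X ⊆ M.E := fun X => by rw [hE]; exact subset_univ X
  -- no loops: nothing is in the closure of ∅
  have hnotloop : ∀ i : α, i ∉ M.closure ∅ := by
    intro i hi
    rcases M.empty_indep.mem_closure_iff.mp hi with h | h
    · rw [insert_empty_eq] at h
      exact h.1 (hloopless i)
    · exact h
  -- global upper bound for w
  obtain ⟨B, hB⟩ : ∃ B : ℝ, ∀ j, w j ≤ B := Finite.exists_le w
  -- the defining sets
  set S : α → Set ℝ := fun i => {k : ℝ | i ∈ M.closure {j | k ≤ w j}} with hS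
  have hSne : ∀ i, w i ∈ S i := by
    intro i
    exact M.subset_closure {j | w i ≤ w j} (hsub _) (by simp)
  have hSbdd : ∀ i, BddAbove (S i) := by
    intro i
    refine ⟨B, fun k hk => ?_⟩
    by_contra hkB
    push_neg at hkB
    have : {j | k ≤ w j} = (∅ : Set α) := by
      ext j; simp only [mem_setOf_eq, mem_empty_iff_false, iff_false, not_le]
      exact lt_of_le_of_lt (hB j) hkB
    rw [hS] at hk
    simp only [mem_setOf_eq, this] at hk
    exact hnotloop i hk
  -- S i is downward closed
  have hSdown : ∀ i, ∀ k k' : ℝ, k ≤ k' → k' ∈ S i → k ∈ S i := by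
    intro i k k' hkk' hk'
    exact M.closure_subset_closure (fun j hj => le_trans hkk' hj) hk'
  have hSlt : ∀ i, ∀ k : ℝ, k < canonProj M w i → k ∈ S i := by
    intro i k hk
    obtain ⟨k', hk', hkk'⟩ := exists_lt_of_lt_csSup ⟨w i, hSne i⟩ hk
    exact hSdown i k k' hkk'.le hk'
  -- C is nonempty
  have hCne : C.Nonempty := by
    rw [nonempty_iff_ne_empty]
    rintro rfl
    exact hCdep.1 M.empty_indep
  obtain ⟨x, hxC, hxmin⟩ := Set.exists_min_image C (canonProj M w) C.toFinite hCne
  refine ⟨x, hxC, ?_⟩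
  by_contra hno
  push_neg at hno
  -- so the minimum is attained uniquely at x
  have hstrict : ∀ y ∈ C, y ≠ x → canonProj M w x < canonProj M w y := by
    intro y hyC hyx
    rcases lt_or_eq_of_le (hxmin y hyC) with h | h
    · exact h
    · obtain ⟨c, hc, hnc⟩ := hno y hyC (Ne.symm hyx) h
      exact absurd (hxmin c hc) (not_le.mpr hnc)
  -- C \ {x} is nonempty
  have hCx_ne : (C \ {x}).Nonempty := by
    rw [nonempty_iff_ne_empty]
    intro h
    have hCsub : C ⊆ {x} := by
      intro c hc
      by_contra hcx
      exact (h ▸ (⟨hc, hcx⟩ : c ∈ C \ {x}) : c ∈ (∅ : Set α))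
    have : C = {x} := hCsub.antisymm (by simpa using hxC)
    rw [this] at hCdep
    exact hCdep.1 (hloopless x)
  obtain ⟨y0, hy0, hy0min⟩ :=
    Set.exists_min_image (C \ {x}) (canonProj M w) (C \ {x}).toFinite hCx_ne
  have hm : canonProj M w x < canonProj M w y0 := hstrict y0 hy0.1 hy0.2
  set k : ℝ := (canonProj M w x + canonProj M w y0) / 2 with hkdef
  have hk1 : canonProj M w x < k := by rw [hkdef]; linarith
  have hk2 : k < canonProj M w y0 := by rw [hkdef]; linarith
  -- every element of C \ {x} lies in the closure of A := {j | k ≤ w j}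
  have hCxcl : C \ {x} ⊆ M.closure {j | k ≤ w j} := by
    intro c hc
    exact hSlt c k (lt_of_lt_of_le hk2 (hy0min c hc))
  -- C \ {x} is independent
  have hCx_indep : M.Indep (C \ {x}) := by
    rw [← M.not_dep_iff (hsub _)]
    intro hd
    have := hCmin (C \ {x}) diff_subset hd
    have hxmem : x ∈ C \ {x} := by rw [this]; exact hxC
    exact hxmem.2 rfl
  -- x is in the closure of C \ {x}
  have hxcl : x ∈ M.closure (C \ {x}) := by
    rw [hCx_indep.mem_closure_iff]
    left
    rwa [insert_diff_singleton, insert_eq_of_mem hxC]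
  -- hence x ∈ closure A, i.e. k ∈ S x
  have hkx : k ∈ S x :=
    M.closure_subset_closure_of_subset_closure hCxcl hxcl
  have : k ≤ canonProj M w x := le_csSup (hSbdd x) hkx
  exact absurd this (not_le.mpr hk1)
end

section
/- Let M be a finite loopless matroid on ground set E and let w : E → ℝ satisfy the tropical circuit condition. Then Φ_M(w) = w; in particular, the canonical projection Φ_M restricted to the support of the Bergman fan of M is the identity, so Φ_M ∘ Φ_M = Φ_M. -/
open Set

section Aux

variable {α : Type*} [Fintype α] {M : Matroid α}

lemma aux_subset_ground (hE : M.E = Set.univ) (A : Set α) : A ⊆ M.E := by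
  rw [hE]; exact Set.subset_univ _

/-- The defining set of `canonProj` is nonempty. -/
lemma aux_nonempty (hE : M.E = Set.univ) (v : α → ℝ) (i : α) :
    (v i) ∈ {k : ℝ | i ∈ M.closure {j | k ≤ v j}} := by
  exact M.subset_closure _ (aux_subset_ground hE _) (by simp : v i ≤ v i)

lemma aux_not_mem_closure_empty (hloopless : ∀ e : α, M.Indep {e}) (i : α) :
    i ∉ M.closure ∅ := by
  intro h
  have h2 := (M.empty_indep.mem_closure_iff_of_notMem (Set.notMem_empty i)).1 h
  exact h2.not_indep (by simpa using hloopless i)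

/-- The defining set of `canonProj` is bounded above. -/
lemma aux_bddAbove (hloopless : ∀ e : α, M.Indep {e}) (v : α → ℝ) (i : α) :
    BddAbove {k : ℝ | i ∈ M.closure {j | k ≤ v j}} := by
  have hne : (Finset.univ : Finset α).Nonempty := ⟨i, Finset.mem_univ i⟩
  refine ⟨Finset.univ.sup' hne v, fun k hk => ?_⟩
  by_contra hlt
  push_neg at hlt
  have hempty : {j | k ≤ v j} = (∅ : Set α) := by
    ext j
    simp only [Set.mem_setOf_eq, Set.mem_empty_iff_false, iff_false, not_le]
    exact lt_of_le_of_lt (Finset.le_sup' v (Finset.mem_univ j)) hlt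
  rw [Set.mem_setOf_eq, hempty] at hk
  exact aux_not_mem_closure_empty hloopless i hk

/-- Every dependent set contains a circuit. -/
lemma aux_exists_circuit {D : Set α} (hD : M.Dep D) :
    ∃ C ⊆ D, MatroidCircuit M C := by
  obtain ⟨C, hCD, hmin⟩ := exists_minimal_le_of_wellFoundedLT (fun S => M.Dep S) D hD
  refine ⟨C, hCD, hmin.1, fun D' hD'C hD' => ?_⟩
  exact le_antisymm hD'C (hmin.2 hD' hD'C)

/-- If `i ∈ cl(A)` and `i ∉ A`, there is a circuit `C ⊆ A ∪ {i}` with `i ∈ C`. -/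
lemma aux_fund_circuit (hE : M.E = Set.univ) {A : Set α} {i : α}
    (hi : i ∈ M.closure A) (hiA : i ∉ A) :
    ∃ C, MatroidCircuit M C ∧ i ∈ C ∧ C \ {i} ⊆ A := by
  obtain ⟨I, hI⟩ := M.exists_isBasis A (aux_subset_ground hE A)
  have hiI : i ∉ I := fun h => hiA (hI.subset h)
  have hicl : i ∈ M.closure I := by rw [hI.closure_eq_closure]; exact hi
  have hdep : M.Dep (insert i I) := (hI.indep.mem_closure_iff_of_notMem hiI).1 hicl
  obtain ⟨C, hCsub, hC⟩ := aux_exists_circuit hdep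
  have hiC : i ∈ C := by
    by_contra hiC
    have hCI : C ⊆ I := fun x hx => by
      rcases hCsub hx with h | h
      · exact absurd (h ▸ hx) hiC
      · exact h
    exact hC.1.not_indep (hI.indep.subset hCI)
  refine ⟨C, hC, hiC, fun x hx => ?_⟩
  rcases hCsub hx.1 with h | h
  · exact absurd h hx.2
  · exact hI.subset h

/-- Each element of a circuit lies in the closure of the rest. -/
lemma aux_mem_closure_diff {C : Set α} (hC : MatroidCircuit M C) {x : α} (hx : x ∈ C) :
    x ∈ M.closure (C \ {x}) := by
  have hindep : M.Indep (C \ {x}) := by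
    by_contra hdep
    have hdep' : M.Dep (C \ {x}) :=
      ⟨hdep, (Set.diff_subset).trans hC.1.subset_ground⟩
    have heq := hC.2 _ Set.diff_subset hdep'
    have hx' : x ∈ C \ {x} := by rw [heq]; exact hx
    exact hx'.2 rfl
  have hxnot : x ∉ C \ {x} := fun h => h.2 rfl
  rw [hindep.mem_closure_iff_of_notMem hxnot, Set.insert_diff_singleton,
    Set.insert_eq_of_mem hx]
  exact hC.1

/-- Main lemma: `Φ_M(w) = w` pointwise under the tropical circuit condition. -/
lemma aux_canonProj_eq (hE : M.E = Set.univ) (hloopless : ∀ e : α, M.Indep {e})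
    {w : α → ℝ} (hw : TropCircuitCond M w) : canonProj M w = w := by
  funext i
  have hmem := aux_nonempty (M := M) hE w i
  refine le_antisymm (csSup_le ⟨w i, hmem⟩ fun k hk => ?_)
    (le_csSup (aux_bddAbove hloopless w i) hmem)
  -- show every k in the set satisfies k ≤ w i
  by_contra hlt
  push_neg at hlt
  set A : Set α := {j | k ≤ w j} with hA
  have hiA : i ∉ A := fun h => not_le.2 hlt h
  obtain ⟨C, hC, hiC, hCA⟩ := aux_fund_circuit hE hk hiA
  obtain ⟨x, hxC, y, hyC, hxy, hwxy, hmin⟩ := hw C hC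
  -- one of x, y is not i
  have : ∃ z ∈ C, z ≠ i ∧ w z = w x := by
    by_cases hxi : x = i
    · exact ⟨y, hyC, fun h => hxy (hxi.trans h.symm), hwxy.symm⟩
    · exact ⟨x, hxC, hxi, rfl⟩
  obtain ⟨z, hzC, hzi, hwz⟩ := this
  have hkz : k ≤ w z := hCA ⟨hzC, hzi⟩
  have hmi := hmin i hiC
  linarith

/-- `Φ_M(v)` always satisfies the tropical circuit condition. -/
lemma aux_trop_canonProj (hE : M.E = Set.univ) (hloopless : ∀ e : α, M.Indep {e})
    (v : α → ℝ) : TropCircuitCond M (canonProj M v) := by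
  set w' := canonProj M v with hw'
  intro C hC
  have hCfin : C.Finite := Set.toFinite C
  have hCne : C.Nonempty := by
    rcases Set.eq_empty_or_nonempty C with h | h
    · exact absurd (h ▸ M.empty_indep) hC.1.not_indep
    · exact h
  obtain ⟨x, hxC, hxmin⟩ := Set.exists_min_image C w' hCfin hCne
  -- if another element attains the min we are done
  by_cases hex : ∃ y ∈ C, y ≠ x ∧ w' y = w' x
  · obtain ⟨y, hyC, hyx, hwy⟩ := hex
    refine ⟨x, hxC, y, hyC, fun h => hyx h.symm, hwy.symm, fun c hc => ?_⟩
    exact hxmin c hc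
  -- otherwise the min is attained uniquely at x; derive a contradiction
  exfalso
  push_neg at hex
  have hstrict : ∀ c ∈ C, c ≠ x → w' x < w' c := by
    intro c hc hcx
    exact lt_of_le_of_ne (hxmin c hc) (fun h => hex c hc hcx h.symm)
  -- C \ {x} is nonempty
  have hCdne : (C \ {x}).Nonempty := by
    by_contra h
    rw [Set.not_nonempty_iff_eq_empty, Set.diff_eq_empty] at h
    have hCx : C = {x} := le_antisymm h (Set.singleton_subset_iff.2 hxC)
    exact hC.1.not_indep (hCx ▸ hloopless x)
  obtain ⟨c₀, hc₀, hm'le⟩ := Set.exists_min_image (C \ {x}) w' (hCfin.diff (t := {x})) hCdne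
  set m' : ℝ := w' c₀ with hm'def
  have hxm' : w' x < m' := hstrict c₀ hc₀.1 hc₀.2
  set k : ℝ := (w' x + m') / 2 with hk
  have hk1 : w' x < k := by rw [hk]; linarith
  have hk2 : k < m' := by rw [hk]; linarith
  -- every element of C \ {x} lies in cl {j | k ≤ v j}
  have hsub : C \ {x} ⊆ M.closure {j | k ≤ v j} := by
    intro c hc
    have hkc : k < w' c := lt_of_lt_of_le hk2 (hm'le c hc)
    have hSne : {s : ℝ | c ∈ M.closure {j | s ≤ v j}}.Nonempty :=
      ⟨v c, aux_nonempty hE v c⟩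
    obtain ⟨s, hs, hks⟩ := exists_lt_of_lt_csSup hSne hkc
    exact M.closure_subset_closure (fun j hj => le_trans hks.le hj) hs
  -- hence x ∈ cl {j | k ≤ v j}, so k is in the sup-set for x
  have hxcl : x ∈ M.closure {j | k ≤ v j} := by
    have h1 : x ∈ M.closure (C \ {x}) := aux_mem_closure_diff hC hxC
    exact Matroid.closure_subset_closure_of_subset_closure hsub h1
  have : k ≤ w' x := le_csSup (aux_bddAbove hloopless v x) hxcl
  exact absurd this (not_le.2 hk1)

end Aux

/-- for a finite loopless matroid, if `w` satisfies the tropical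
circuit condition then `Φ_M(w) = w`; in particular `Φ_M` is the identity on the
support of the Bergman fan, so `Φ_M ∘ Φ_M = Φ_M`. -/
theorem canonProj_fixes_bergman {α : Type*} [Fintype α] (M : Matroid α)
    (hE : M.E = Set.univ) (hloopless : ∀ e : α, M.Indep {e})
    (w : α → ℝ) (hw : TropCircuitCond M w) :
    canonProj M w = w ∧
      ∀ v : α → ℝ, canonProj M (canonProj M v) = canonProj M v := by
  refine ⟨aux_canonProj_eq hE hloopless hw, fun v => ?_⟩
  exact aux_canonProj_eq hE hloopless (aux_trop_canonProj hE hloopless v)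
end

section
/- Let M be a finite loopless matroid on ground set E, let w : E → ℝ, and let B be a maximum-weight basis of M with respect to w. Then Φ_M(w)(b) = w(b) for every b ∈ B, and Φ_M(w)(e) = min{ w(c) : c ∈ C(e,B), c ≠ e } for every e ∉ B, where C(e,B) is the fundamental circuit of e with respect to B. (That is, the restriction of the canonical projection Φ_M to the Gröbner cone of the basis B coincides with the piecewise-linear map φ_B composed with projection onto the B-coordinates.) -/
open Set

/-- The greedy/spanning property of a maximum-weight basis: for every threshold `k`,
the elements of `B` above the threshold span everything above the threshold. -/
private lemma greedy_aux {α : Type*} [Fintype α] (M : Matroid α)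
    (hE : M.E = Set.univ)
    (w : α → ℝ) (B : Set α) (hB : M.IsBase B)
    (hmax : ∀ B', M.IsBase B' → ∑ b ∈ (Set.toFinite B').toFinset, w b ≤
      ∑ b ∈ (Set.toFinite B).toFinset, w b) (k : ℝ) :
    M.closure {j | k ≤ w j} = M.closure (B ∩ {j | k ≤ w j}) := by
  classical
  have hss : ∀ s : Set α, s ⊆ M.E := fun s => by rw [hE]; exact subset_univ _
  refine le_antisymm ?_ (M.closure_subset_closure inter_subset_right)
  refine M.closure_subset_closure_of_subset_closure ?_
  intro a ha
  have hka : k ≤ w a := ha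
  by_contra hacl
  have haB : a ∉ B := fun h => hacl (M.subset_closure _ (hss _) ⟨h, ha⟩)
  set 𝒥 : Set (Set α) := {J | J ⊆ B ∧ B ∩ {j | k ≤ w j} ⊆ J ∧ a ∉ M.closure J} with h𝒥
  have hne : (B ∩ {j | k ≤ w j}) ∈ 𝒥 := ⟨inter_subset_left, subset_rfl, hacl⟩
  obtain ⟨J, hJ, hJmax⟩ : ∃ J ∈ 𝒥, ∀ J' ∈ 𝒥, id J ≤ id J' → id J = id J' := by
    obtain ⟨J, hJ, hJm⟩ := Set.Finite.exists_maximalFor id 𝒥 (Set.toFinite 𝒥) ⟨_, hne⟩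
    exact ⟨J, hJ, fun J' h h' => le_antisymm h' (hJm h h')⟩
  obtain ⟨hJB, hBAJ, haJ⟩ := hJ
  have hJneB : ¬ B ⊆ J := by
    intro h
    have hJB' : J = B := subset_antisymm hJB h
    rw [hJB', hB.closure_eq, hE] at haJ
    exact haJ (mem_univ a)
  obtain ⟨c, hcB, hcJ⟩ := not_subset.mp hJneB
  have hJeq : J = B \ {c} := by
    refine subset_antisymm (subset_diff_singleton hJB hcJ) ?_
    rintro d ⟨hdB, hdc⟩
    by_contra hdJ
    have hcd : c ≠ d := fun h => hdc (mem_singleton_iff.mpr h.symm)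
    have hmemc : a ∈ M.closure (insert c J) := by
      by_contra h
      have hmem : insert c J ∈ 𝒥 := ⟨insert_subset hcB hJB, hBAJ.trans (subset_insert _ _), h⟩
      have heq := hJmax _ hmem (subset_insert _ _)
      simp only [id] at heq
      exact hcJ (heq ▸ mem_insert c J)
    have hmemd : a ∈ M.closure (insert d J) := by
      by_contra h
      have hmem : insert d J ∈ 𝒥 := ⟨insert_subset hdB hJB, hBAJ.trans (subset_insert _ _), h⟩
      have heq := hJmax _ hmem (subset_insert _ _)
      simp only [id] at heq
      exact hdJ (heq ▸ mem_insert d J)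
    have hunion : M.Indep (insert c J ∪ insert d J) :=
      hB.indep.subset (union_subset (insert_subset hcB hJB) (insert_subset hdB hJB))
    have hint : insert c J ∩ insert d J = J := by
      apply subset_antisymm
      · rintro x ⟨hx1, hx2⟩
        rcases mem_insert_iff.mp hx1 with rfl | hx1
        · rcases mem_insert_iff.mp hx2 with h | hx2
          · exact absurd h hcd
          · exact hx2
        · exact hx1
      · exact subset_inter (subset_insert _ _) (subset_insert _ _)
    have hcl := hunion.closure_inter_eq_inter_closure
    rw [hint] at hcl
    exact haJ (hcl ▸ ⟨hmemc, hmemd⟩)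
  have hck : ¬ k ≤ w c := fun h => hcJ (hBAJ ⟨hcB, h⟩)
  have hind : M.Indep (insert a (B \ {c})) := by
    rw [(hB.indep.subset diff_subset).insert_indep_iff_of_notMem (fun h => haB h.1)]
    exact ⟨by rw [hE]; exact mem_univ a, by rw [← hJeq]; exact haJ⟩
  have hB' : M.IsBase (insert a (B \ {c})) := hB.exchange_isBase_of_indep haB hind
  have hle := hmax _ hB'
  have hfin : (Set.toFinite (insert a (B \ {c}))).toFinset
      = insert a ((Set.toFinite B).toFinset.erase c) := by
    ext x
    simp only [Set.Finite.mem_toFinset, Set.mem_insert_iff, Set.mem_diff, Set.mem_singleton_iff,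
      Finset.mem_insert, Finset.mem_erase]
    tauto
  have hna : a ∉ (Set.toFinite B).toFinset.erase c :=
    fun h => haB ((Set.Finite.mem_toFinset _).mp (Finset.mem_of_mem_erase h))
  rw [hfin, Finset.sum_insert hna] at hle
  have hsum := Finset.sum_erase_add (Set.toFinite B).toFinset w
    ((Set.Finite.mem_toFinset _).mpr hcB)
  push_neg at hck
  linarith

/-- if `B` is a maximum-weight basis for `w` then
`Φ_M(w)(b) = w b` for `b ∈ B` and
`Φ_M(w)(e) = min { w c : c ∈ C(e,B), c ≠ e }` for `e ∉ B`. -/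
theorem canonProj_eq_phiB_on_cone {α : Type*} [Fintype α] (M : Matroid α)
    (hE : M.E = Set.univ) (hloopless : ∀ e : α, M.Indep {e})
    (w : α → ℝ) (B : Set α) (hB : M.IsBase B)
    (hmax : ∀ B', M.IsBase B' → ∑ b ∈ (Set.toFinite B').toFinset, w b ≤
      ∑ b ∈ (Set.toFinite B).toFinset, w b) :
    (∀ b ∈ B, canonProj M w b = w b) ∧
      (∀ e, e ∉ B → canonProj M w e = sInf (w '' (fundCircuit M B e \ {e}))) := by
  classical
  have hss : ∀ s : Set α, s ⊆ M.E := fun s => by rw [hE]; exact subset_univ _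
  have hEmem : ∀ x : α, x ∈ M.E := fun x => by rw [hE]; exact mem_univ x
  constructor
  · -- part 1 : b ∈ B
    intro b hb
    have hub : ∀ k ∈ {k : ℝ | b ∈ M.closure {j | k ≤ w j}}, k ≤ w b := by
      intro k hk
      by_contra h
      push_neg at h
      rw [mem_setOf_eq, greedy_aux M hE w B hB hmax k] at hk
      have hsub : B ∩ {j | k ≤ w j} ⊆ B \ {b} := by
        rintro x ⟨hxB, hxk⟩
        exact ⟨hxB, fun hxb => absurd (mem_singleton_iff.mp hxb ▸ hxk) (not_le.mpr h)⟩
      exact hB.indep.notMem_closure_diff_of_mem hb (M.closure_subset_closure hsub hk)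
    have hmem : w b ∈ {k : ℝ | b ∈ M.closure {j | k ≤ w j}} :=
      M.subset_closure _ (hss _) (show w b ≤ w b from le_refl _)
    exact le_antisymm (csSup_le ⟨_, hmem⟩ hub) (le_csSup ⟨w b, hub⟩ hmem)
  · -- part 2 : e ∉ B
    intro e heB
    set 𝒮 : Set (Set α) := {J | J ⊆ B ∧ e ∈ M.closure J} with h𝒮
    have hBS : B ∈ 𝒮 := ⟨subset_rfl, by rw [hB.closure_eq]; exact hEmem e⟩
    obtain ⟨J0, hJ0, hJ0min⟩ : ∃ J0 ∈ 𝒮, ∀ J' ∈ 𝒮, id J' ≤ id J0 → id J0 = id J' := by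
      obtain ⟨J0, hJ0, hJm⟩ := Set.Finite.exists_minimalFor id 𝒮 (Set.toFinite 𝒮) ⟨B, hBS⟩
      exact ⟨J0, hJ0, fun J' h h' => le_antisymm (hJm h h') h'⟩
    have hmin : ∀ J ∈ 𝒮, J0 ⊆ J := by
      intro J hJ
      have hu : M.Indep (J0 ∪ J) := hB.indep.subset (union_subset hJ0.1 hJ.1)
      have he2 : e ∈ M.closure (J0 ∩ J) := by
        rw [hu.closure_inter_eq_inter_closure]; exact ⟨hJ0.2, hJ.2⟩
      have heq : J0 ∩ J = J0 :=
        (hJ0min _ ⟨inter_subset_left.trans hJ0.1, he2⟩ inter_subset_left).symm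
      rw [← heq]; exact inter_subset_right
    have heJ0 : e ∉ J0 := fun h => heB (hJ0.1 h)
    have hC0dep : M.Dep (insert e J0) :=
      (hB.indep.subset hJ0.1).insert_dep_iff.mpr ⟨hJ0.2, heJ0⟩
    -- any dependent subset of `insert e B` contains `e` and (after removing `e`) contains `J0`
    have key : ∀ D, D ⊆ insert e B → M.Dep D → e ∈ D ∧ J0 ⊆ D \ {e} := by
      intro D hD hDdep
      have heD : e ∈ D := by
        by_contra h
        refine hDdep.not_indep (hB.indep.subset fun x hx => ?_)
        rcases mem_insert_iff.mp (hD hx) with rfl | hxB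
        · exact absurd hx h
        · exact hxB
      have hDe : D \ {e} ⊆ B := by
        rintro x ⟨hx, hxe⟩
        rcases mem_insert_iff.mp (hD hx) with rfl | hxB
        · exact absurd rfl hxe
        · exact hxB
      have hind : M.Indep (D \ {e}) := hB.indep.subset hDe
      have hecl : e ∈ M.closure (D \ {e}) := by
        by_contra h
        rw [hind.notMem_closure_iff_of_notMem (fun h' => h'.2 rfl) (hEmem e)] at h
        refine hDdep.not_indep (h.subset fun x hx => ?_)
        by_cases hxe : x = e
        · exact hxe ▸ mem_insert _ _
        · exact mem_insert_of_mem _ ⟨hx, hxe⟩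
      exact ⟨heD, hmin _ ⟨hDe, hecl⟩⟩
    have hcirc : MatroidCircuit M (insert e J0) := by
      refine ⟨hC0dep, fun D hD hDdep => ?_⟩
      obtain ⟨heD, hJ0D⟩ := key D (hD.trans (insert_subset_insert hJ0.1)) hDdep
      have h1 : D \ {e} = J0 := by
        refine subset_antisymm (fun x hx => ?_) hJ0D
        exact (mem_insert_iff.mp (hD hx.1)).resolve_left (fun h' => hx.2 (mem_singleton_iff.mpr h'))
      calc D = insert e (D \ {e}) := by rw [insert_diff_singleton, insert_eq_self.mpr heD]
        _ = insert e J0 := by rw [h1]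
    have hfc : fundCircuit M B e = insert e J0 := by
      have hset : {C | MatroidCircuit M C ∧ e ∈ C ∧ C ⊆ insert e B} = {insert e J0} := by
        apply subset_antisymm
        · rintro C ⟨hCc, heC, hCB⟩
          obtain ⟨-, hJ0C⟩ := key C hCB hCc.1
          have hsub : insert e J0 ⊆ C := insert_subset heC (hJ0C.trans diff_subset)
          exact mem_singleton_iff.mpr (hCc.2 _ hsub hC0dep).symm
        · rintro C hC
          rw [mem_singleton_iff] at hC
          subst hC
          exact ⟨hcirc, mem_insert _ _, insert_subset_insert hJ0.1⟩
      rw [fundCircuit, hset, sInter_singleton]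
    have hJ0ne : J0.Nonempty := by
      rw [nonempty_iff_ne_empty]
      rintro rfl
      have h1 : M.Indep (insert e (∅ : Set α)) := by simpa using hloopless e
      exact (M.empty_indep.notMem_closure_iff_of_notMem (notMem_empty e) (hEmem e)).mpr h1 hJ0.2
    have himg : (w '' J0).Nonempty := hJ0ne.image w
    have hfinimg : (w '' J0).Finite := (Set.toFinite J0).image w
    obtain ⟨c, hcJ0, hcm⟩ := himg.csInf_mem hfinimg
    have hmemS : sInf (w '' J0) ∈ {k : ℝ | e ∈ M.closure {j | k ≤ w j}} := by
      have hsub : J0 ⊆ {j | sInf (w '' J0) ≤ w j} :=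
        fun x hx => csInf_le hfinimg.bddBelow (mem_image_of_mem w hx)
      exact M.closure_subset_closure hsub hJ0.2
    have hub : ∀ k ∈ {k : ℝ | e ∈ M.closure {j | k ≤ w j}}, k ≤ sInf (w '' J0) := by
      intro k hk
      by_contra h
      push_neg at h
      rw [mem_setOf_eq, greedy_aux M hE w B hB hmax k] at hk
      have hsub : J0 ⊆ B ∩ {j | k ≤ w j} := hmin _ ⟨inter_subset_left, hk⟩
      have hck : k ≤ w c := (hsub hcJ0).2
      rw [hcm] at hck
      exact absurd hck (not_le.mpr h)
    have hdiff : fundCircuit M B e \ {e} = J0 := by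
      rw [hfc, insert_diff_self_of_notMem heJ0]
    rw [hdiff]
    exact le_antisymm (csSup_le ⟨_, hmemS⟩ hub) (le_csSup ⟨_, hub⟩ hmemS)
end

section
/- Let M be a matroid on a finite ground set E and let w : E → ℝ be injective. Let B = E \ { e ∈ E : there exists a circuit C of M with e ∈ C and w(e) < w(c) for every c ∈ C with c ≠ e } (the complement of the set of elements realizable as initial forms of circuits with respect to w). Then B is a basis of M, and B is the unique basis of maximum total weight: for every basis B' of M with B' ≠ B one has ∑_{b ∈ B'} w(b) < ∑_{b ∈ B} w(b). -/
open Set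

section Aux

variable {α : Type*} [Fintype α] {M : Matroid α}

/-- Every dependent set contains a circuit (finite ground set). -/
lemma aux_dep_has_circuit (M : Matroid α) :
    ∀ n (D : Set α), D.ncard ≤ n → M.Dep D → ∃ C, C ⊆ D ∧ MatroidCircuit M C := by
  intro n
  induction n with
  | zero =>
    intro D hcard hdep
    have hD : D = ∅ := by
      rw [← Set.ncard_eq_zero D.toFinite]; omega
    rw [hD] at hdep
    exact absurd M.empty_indep hdep.not_indep
  | succ n ih =>
    intro D hcard hdep
    by_cases h : ∀ D' ⊆ D, M.Dep D' → D' = D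
    · exact ⟨D, Subset.rfl, hdep, h⟩
    · push_neg at h
      obtain ⟨D', hsub, hdep', hne⟩ := h
      have hlt : D'.ncard < D.ncard :=
        Set.ncard_lt_ncard (ssubset_of_subset_of_ne hsub hne) D.toFinite
      obtain ⟨C, hCsub, hC⟩ := ih D' (by omega) hdep'
      exact ⟨C, hCsub.trans hsub, hC⟩

/-- Every element of a circuit is in the closure of the rest of the circuit. -/
lemma aux_circuit_mem_closure (hE : M.E = univ) {C : Set α} (hC : MatroidCircuit M C) {f : α}
    (hf : f ∈ C) : f ∈ M.closure (C \ {f}) := by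
  have hsub : C \ {f} ⊆ M.E := by rw [hE]; exact subset_univ _
  have hind : M.Indep (C \ {f}) := by
    rw [← Matroid.not_dep_iff hsub]
    intro hdep
    have h := hC.2 _ diff_subset hdep
    rw [← h] at hf
    exact hf.2 rfl
  apply (hind.mem_closure_iff_of_notMem (by simp)).2
  rw [insert_diff_singleton, insert_eq_of_mem hf]
  exact hC.1

noncomputable def wsum (w : α → ℝ) (S : Set α) : ℝ := ∑ b ∈ S.toFinite.toFinset, w b

lemma wsum_insert (w : α → ℝ) {S : Set α} {a : α} (ha : a ∉ S) :
    wsum w (insert a S) = w a + wsum w S := by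
  classical
  unfold wsum
  rw [show (insert a S).toFinite.toFinset = insert a S.toFinite.toFinset from by ext x; simp,
    Finset.sum_insert (by simpa using ha)]

lemma wsum_exchange (w : α → ℝ) {S : Set α} {a b : α} (ha : a ∉ S) (hb : b ∈ S) :
    wsum w (insert a (S \ {b})) = wsum w S + w a - w b := by
  rw [wsum_insert w (fun h => ha h.1)]
  have h2 : wsum w S = w b + wsum w (S \ {b}) := by
    rw [← wsum_insert w (fun h : b ∈ S \ {b} => h.2 rfl), insert_diff_singleton,
      insert_eq_of_mem hb]
  rw [h2]; ring

/-- A maximum-weight base equals the complement of the set of initial forms of circuits. -/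
lemma aux_max_base_eq (M : Matroid α) (hE : M.E = univ) (w : α → ℝ)
    (hinj : Function.Injective w) {B₀ : Set α} (hB₀ : M.IsBase B₀)
    (hmax : ∀ B₁, M.IsBase B₁ → wsum w B₁ ≤ wsum w B₀) :
    B₀ = {e | ∃ C, MatroidCircuit M C ∧ e ∈ C ∧ ∀ c ∈ C, c ≠ e → w e < w c}ᶜ := by
  have hmemE : ∀ x : α, x ∈ M.E := fun x => by rw [hE]; trivial
  apply subset_antisymm
  · -- no element of B₀ is the unique minimum of a circuit
    intro e he
    simp only [mem_compl_iff, mem_setOf_eq]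
    rintro ⟨C, hC, heC, hmin⟩
    have hIe : M.Indep (B₀ \ {e}) := hB₀.indep.subset diff_subset
    have hnotcl : ¬ (C \ {e} ⊆ M.closure (B₀ \ {e})) := by
      intro hsub
      have h1 : e ∈ M.closure (C \ {e}) := aux_circuit_mem_closure hE hC heC
      have h2 : M.closure (C \ {e}) ⊆ M.closure (B₀ \ {e}) :=
        M.closure_subset_closure_of_subset_closure hsub
      exact hB₀.indep.notMem_closure_diff_of_mem he (h2 h1)
    obtain ⟨f, hfC, hfcl⟩ := not_subset.1 hnotcl
    have hfB : f ∉ B₀ \ {e} := fun h => hfcl (M.mem_closure_of_mem' h (hmemE f))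
    have hfB₀ : f ∉ B₀ := fun h => hfB ⟨h, hfC.2⟩
    have hind : M.Indep (insert f (B₀ \ {e})) := by
      rw [hIe.insert_indep_iff]
      exact Or.inl ⟨hmemE f, hfcl⟩
    obtain ⟨B₂, hB₂, hsub₂⟩ := hind.exists_isBase_superset
    have hcard : (insert f (B₀ \ {e})).encard = B₂.encard := by
      rw [hB₂.encard_eq_encard_of_isBase hB₀, Set.encard_insert_of_notMem hfB,
        Set.encard_diff_singleton_add_one he]
    have hBeq : insert f (B₀ \ {e}) = B₂ :=
      (insert f (B₀ \ {e})).toFinite.eq_of_subset_of_encard_le hsub₂ (le_of_eq hcard.symm)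
    have hle := hmax B₂ hB₂
    rw [← hBeq, wsum_exchange w hfB₀ he] at hle
    have hwe : w e < w f := hmin f hfC.1 hfC.2
    linarith
  · -- every element outside B₀ is the unique minimum of some circuit
    intro e he
    by_contra heB
    have hdep : M.Dep (insert e B₀) := hB₀.insert_dep ⟨hmemE e, heB⟩
    obtain ⟨C, hCsub, hC⟩ := aux_dep_has_circuit M _ _ le_rfl hdep
    have heC : e ∈ C := by
      by_contra heC
      have hCB : C ⊆ B₀ := fun x hx => (hCsub hx).resolve_left (fun h => heC (h ▸ hx))
      exact hC.1.not_indep (hB₀.indep.subset hCB)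
    refine he ⟨C, hC, heC, fun f hfC hfe => ?_⟩
    have hfB : f ∈ B₀ := (hCsub hfC).resolve_left hfe
    have heB' : e ∉ B₀ \ {f} := fun h => heB h.1
    have hfcl : f ∈ M.closure (insert e (B₀ \ {f})) := by
      have h1 : f ∈ M.closure (C \ {f}) := aux_circuit_mem_closure hE hC hfC
      refine M.closure_subset_closure ?_ h1
      intro x hx
      rcases hCsub hx.1 with h | h
      · exact h ▸ mem_insert _ _
      · exact mem_insert_of_mem _ ⟨h, hx.2⟩
    have hSsub : insert e (B₀ \ {f}) ⊆ M.E := by rw [hE]; exact subset_univ _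
    have hspan : M.Spanning (insert e (B₀ \ {f})) := by
      rw [Matroid.spanning_iff_ground_subset_closure hSsub]
      have hB₀cl : B₀ ⊆ M.closure (insert e (B₀ \ {f})) := by
        intro x hx
        by_cases hxf : x = f
        · exact hxf ▸ hfcl
        · exact M.mem_closure_of_mem' (mem_insert_of_mem _ ⟨hx, hxf⟩) (hmemE x)
      calc M.E = M.closure B₀ := hB₀.closure_eq.symm
        _ ⊆ M.closure (insert e (B₀ \ {f})) :=
          M.closure_subset_closure_of_subset_closure hB₀cl
    obtain ⟨B₂, hB₂, hsub₂⟩ := hspan.exists_isBase_subset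
    have hcard : (insert e (B₀ \ {f})).encard = B₂.encard := by
      rw [hB₂.encard_eq_encard_of_isBase hB₀, Set.encard_insert_of_notMem heB',
        Set.encard_diff_singleton_add_one hfB]
    have hBeq : B₂ = insert e (B₀ \ {f}) :=
      B₂.toFinite.eq_of_subset_of_encard_le hsub₂ (le_of_eq hcard)
    have hle := hmax B₂ hB₂
    rw [hBeq, wsum_exchange w heB hfB] at hle
    have hwef : w e ≤ w f := by linarith
    exact lt_of_le_of_ne hwef (fun h => hfe (hinj h.symm))

end Aux

/-- for an injective weight `w`, the complement `B` of the set of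
elements realizable as initial forms of circuits (unique minima of `w` on a circuit)
is a basis, and it is the unique basis of maximum total weight. -/
theorem complement_of_initial_forms_is_unique_max_basis {α : Type*} [Fintype α]
    (M : Matroid α) (hE : M.E = Set.univ) (w : α → ℝ)
    (hinj : Function.Injective w) (B : Set α)
    (hBdef : B = {e | ∃ C, MatroidCircuit M C ∧ e ∈ C ∧
      ∀ c ∈ C, c ≠ e → w e < w c}ᶜ) :
    M.IsBase B ∧ ∀ B', M.IsBase B' → B' ≠ B →
      ∑ b ∈ (Set.toFinite B').toFinset, w b <
        ∑ b ∈ (Set.toFinite B).toFinset, w b := by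
  obtain ⟨B₀, hB₀base, hB₀max⟩ :=
    Set.exists_max_image {B | M.IsBase B} (wsum w) (Set.toFinite _) M.exists_isBase
  have hBeq : B = B₀ := by
    rw [hBdef, aux_max_base_eq M hE w hinj hB₀base (fun B₁ h => hB₀max B₁ h)]
  constructor
  · exact hBeq ▸ hB₀base
  · intro B' hB' hne
    have hle : wsum w B' ≤ wsum w B := hBeq ▸ hB₀max B' hB'
    show wsum w B' < wsum w B
    refine lt_of_le_of_ne hle (fun heq => hne ?_)
    have hmax' : ∀ B₁, M.IsBase B₁ → wsum w B₁ ≤ wsum w B' := by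
      intro B₁ h
      rw [heq, hBeq]
      exact hB₀max B₁ h
    rw [hBdef, aux_max_base_eq M hE w hinj hB' hmax']
end

section
/- Let N be a finite loopless modular matroid of rank r on ground set E. Let ∅ = F_0 ⊊ F_1 ⊊ ⋯ ⊊ F_r = E and ∅ = G_0 ⊊ G_1 ⊊ ⋯ ⊊ G_r = E be two complete flags of flats of N (so rk(F_i) = rk(G_i) = i for all i). Then there exists a basis B of N that is adapted to both flags, i.e., |B ∩ F_i| = i and |B ∩ G_i| = i for all 0 ≤ i ≤ r. -/
open Set

/-- The rank of a set in a matroid: the supremum of the cardinalities of independent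
subsets. -/
noncomputable def mrk {α : Type*} (M : Matroid α) (X : Set α) : ℕ :=
  sSup {n | ∃ I, M.Indep I ∧ I ⊆ X ∧ I.ncard = n}

/-- A matroid is modular if every pair of flats is a modular pair:
`rk F + rk G = rk (cl (F ∪ G)) + rk (F ∩ G)`. -/
def IsModularMatroid {α : Type*} (M : Matroid α) : Prop :=
  ∀ F G : Set α, M.IsFlat F → M.IsFlat G →
    mrk M F + mrk M G = mrk M (M.closure (F ∪ G)) + mrk M (F ∩ G)

section helpers
variable {α : Type*} [Fintype α] {N : Matroid α}

private lemma mrk_bdd (X : Set α) : BddAbove {n | ∃ I, N.Indep I ∧ I ⊆ X ∧ I.ncard = n} := by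
  refine ⟨Fintype.card α, fun n hn => ?_⟩
  obtain ⟨I, -, -, rfl⟩ := hn
  have := Set.ncard_le_ncard (subset_univ I) (toFinite _)
  simpa [Set.ncard_univ, Nat.card_eq_fintype_card] using this

private lemma le_mrk {I X : Set α} (hI : N.Indep I) (hIX : I ⊆ X) : I.ncard ≤ mrk N X :=
  le_csSup (mrk_bdd X) ⟨I, hI, hIX, rfl⟩

private lemma mrk_mem (X : Set α) : ∃ I, N.Indep I ∧ I ⊆ X ∧ I.ncard = mrk N X :=
  Nat.sSup_mem ⟨0, show ∃ I, N.Indep I ∧ I ⊆ X ∧ I.ncard = 0 from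
    ⟨∅, N.empty_indep, empty_subset X, by simp⟩⟩ (mrk_bdd X)

private lemma mrk_mono {X Y : Set α} (h : X ⊆ Y) : mrk N X ≤ mrk N Y := by
  obtain ⟨I, hI, hIX, hc⟩ := mrk_mem (N := N) X
  exact hc ▸ le_mrk hI (hIX.trans h)

private lemma mrk_spans (hE : N.E = univ) {Fl I : Set α} (hFl : N.IsFlat Fl) (hI : N.Indep I)
    (hIF : I ⊆ Fl) (hcard : mrk N Fl ≤ I.ncard) : N.closure I = Fl := by
  refine subset_antisymm (by simpa [hFl.closure] using N.closure_subset_closure hIF) fun x hx => ?_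
  by_cases hxI : x ∈ I
  · exact N.subset_closure I (by simp [hE]) hxI
  by_contra hxc
  have hins : N.Indep (insert x I) := by
    rw [hI.insert_indep_iff_of_notMem hxI]
    exact ⟨by simp [hE], hxc⟩
  have : (insert x I).ncard ≤ mrk N Fl := le_mrk hins (insert_subset hx hIF)
  rw [Set.ncard_insert_of_notMem hxI (toFinite _)] at this
  omega

private lemma mrk_subset_flat (hE : N.E = univ) {F X : Set α} (hF : N.IsFlat F) (hFX : F ⊆ X)
    (hle : mrk N X ≤ mrk N F) : X ⊆ F := by
  obtain ⟨I, hI, hIF, hc⟩ := mrk_mem (N := N) F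
  have hcl : N.closure I = F := mrk_spans hE hF hI hIF hc.ge
  intro x hx
  by_contra hxF
  have hxI : x ∉ I := fun h => hxF (hIF h)
  have hins : N.Indep (insert x I) := by
    rw [hI.insert_indep_iff_of_notMem hxI]
    exact ⟨by simp [hE], by rw [hcl]; exact hxF⟩
  have := le_mrk hins (insert_subset hx (hIF.trans hFX))
  rw [Set.ncard_insert_of_notMem hxI (toFinite _), hc] at this
  omega

omit [Fintype α] in
private lemma flat_inter {F G : Set α} (hF : N.IsFlat F) (hG : N.IsFlat G) : N.IsFlat (F ∩ G) := by
  rw [Set.inter_eq_iInter]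
  exact Matroid.IsFlat.iInter (by rintro (_|_) <;> assumption)

private lemma aux_flag (hE : N.E = univ) (hmod : IsModularMatroid N) :
    ∀ r (F G : ℕ → Set α),
      (∀ i ≤ r, N.IsFlat (F i)) → (∀ i ≤ r, N.IsFlat (G i)) →
      F 0 = ∅ → G 0 = ∅ → F r = G r →
      (∀ i j, i ≤ j → j ≤ r → F i ⊆ F j) → (∀ i j, i ≤ j → j ≤ r → G i ⊆ G j) →
      (∀ i ≤ r, mrk N (F i) = i) → (∀ i ≤ r, mrk N (G i) = i) →
      ∃ B, B ⊆ F r ∧ N.Indep B ∧ ∀ i ≤ r, (B ∩ F i).ncard = i ∧ (B ∩ G i).ncard = i := by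
  intro r
  induction r with
  | zero =>
    intro F G _ _ hF0 hG0 _ _ _ _ _
    refine ⟨∅, by simp, N.empty_indep, ?_⟩
    intro i hi
    interval_cases i
    simp [hF0, hG0]
  | succ r IH =>
    intro F G hFf hGf hF0 hG0 htop hFm hGm hFr hGr
    classical
    set P : ℕ → Prop := fun j => G j ⊆ F r with hP
    set k : ℕ := Nat.findGreatest P r with hkdef
    have hk_le : k ≤ r := Nat.findGreatest_le r
    have hPk : G k ⊆ F r := Nat.findGreatest_spec (Nat.zero_le r)
      (show P 0 by rw [hP]; simp [hG0])
    have hnot : ∀ j, k < j → j ≤ r + 1 → ¬ G j ⊆ F r := by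
      intro j h1 h2 hsub
      rcases Nat.lt_succ_iff_lt_or_eq.mp (Nat.lt_succ_of_le h2) with hj | rfl
      · exact Nat.findGreatest_is_greatest h1 (by omega) hsub
      · have : (r + 1 : ℕ) ≤ r := by
          have h := mrk_mono (N := N) (htop ▸ hsub)
          rw [hFr (r+1) le_rfl, hFr r (by omega)] at h
          exact h
        omega
    have hGsubF : ∀ j ≤ k, G j ⊆ F r := fun j hj =>
      (hGm j k hj (by omega)).trans hPk
    have claim3 : ∀ j, k < j → j ≤ r + 1 → mrk N (G j ∩ F r) + 1 = j := by
      intro j h1 h2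
      have hU : G j ∪ F r ⊆ F (r+1) := by
        refine union_subset ?_ (hFm r (r+1) (by omega) le_rfl)
        rw [htop]; exact hGm j (r+1) h2 le_rfl
      have hcl_le : mrk N (N.closure (G j ∪ F r)) ≤ r + 1 := by
        have h := N.closure_subset_closure hU
        rw [(hFf (r+1) le_rfl).closure] at h
        have := mrk_mono (N := N) h
        rwa [hFr (r+1) le_rfl] at this
      have hFr_sub : F r ⊆ N.closure (G j ∪ F r) :=
        subset_union_right.trans (N.subset_closure _ (by simp [hE]))
      have hcl_ge : ¬ mrk N (N.closure (G j ∪ F r)) ≤ r := by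
        intro hle'
        have hsub : N.closure (G j ∪ F r) ⊆ F r := by
          refine mrk_subset_flat hE (hFf r (by omega)) hFr_sub ?_
          rw [hFr r (by omega)]; exact hle'
        exact hnot j h1 h2
          ((subset_union_left.trans (N.subset_closure _ (by simp [hE]))).trans hsub)
      have hcl : mrk N (N.closure (G j ∪ F r)) = r + 1 := by omega
      have hmm := hmod (G j) (F r) (hGf j h2) (hFf r (by omega))
      rw [hGr j h2, hFr r (by omega), hcl] at hmm
      omega
    have claim4 : G (k+1) ∩ F r = G k := by
      have h3 := claim3 (k+1) (by omega) (by omega)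
      have hsub : G k ⊆ G (k+1) ∩ F r :=
        subset_inter (hGm k (k+1) (by omega) (by omega)) hPk
      refine subset_antisymm (mrk_subset_flat hE (hGf k (by omega)) hsub ?_) hsub
      rw [hGr k (by omega)]; omega
    set H : ℕ → Set α := fun j => if j ≤ k then G j else G (j+1) ∩ F r with hH
    have HG : ∀ j, j ≤ k → H j = G j := fun j hj => if_pos hj
    have Hgt : ∀ j, k < j → H j = G (j+1) ∩ F r := fun j hj => if_neg (by omega)
    have hHf : ∀ i ≤ r, N.IsFlat (H i) := by
      intro i hi
      by_cases hik : i ≤ k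
      · rw [HG i hik]; exact hGf i (by omega)
      · rw [Hgt i (by omega)]
        exact flat_inter (hGf (i+1) (by omega)) (hFf r (by omega))
    have hH0 : H 0 = ∅ := by rw [HG 0 (Nat.zero_le k)]; exact hG0
    have htop' : F r = H r := by
      by_cases hkr : r ≤ k
      · have hkr' : k = r := le_antisymm hk_le hkr
        rw [HG r (by omega)]
        refine subset_antisymm ?_ (hkr' ▸ hPk)
        refine mrk_subset_flat hE (hGf r (by omega)) (hkr' ▸ hPk) ?_
        rw [hFr r (by omega), hGr r (by omega)]
      · rw [Hgt r (by omega)]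
        refine subset_antisymm (subset_inter ?_ Subset.rfl) inter_subset_right
        rw [← htop]; exact hFm r (r+1) (by omega) le_rfl
    have hHm : ∀ i j, i ≤ j → j ≤ r → H i ⊆ H j := by
      intro i j hij hjr
      by_cases hik : i ≤ k
      · by_cases hjk : j ≤ k
        · rw [HG i hik, HG j hjk]; exact hGm i j hij (by omega)
        · rw [HG i hik, Hgt j (by omega)]
          exact subset_inter (hGm i (j+1) (by omega) (by omega)) (hGsubF i hik)
      · rw [Hgt i (by omega), Hgt j (by omega)]
        exact inter_subset_inter_left _ (hGm (i+1) (j+1) (by omega) (by omega))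
    have hHrk : ∀ i ≤ r, mrk N (H i) = i := by
      intro i hi
      by_cases hik : i ≤ k
      · rw [HG i hik]; exact hGr i (by omega)
      · rw [Hgt i (by omega)]
        have := claim3 (i+1) (by omega) (by omega)
        omega
    obtain ⟨B', hB'F, hB'i, hB'c⟩ := IH F H (fun i hi => hFf i (by omega)) hHf hF0 hH0 htop'
      (fun i j h1 h2 => hFm i j h1 (by omega)) hHm (fun i hi => hFr i (by omega)) hHrk
    have hB'card : B'.ncard = r := by
      have := (hB'c r le_rfl).1
      rwa [inter_eq_left.mpr hB'F] at this
    have hclB' : N.closure B' = F r :=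
      mrk_spans hE (hFf r (by omega)) hB'i hB'F (by rw [hFr r (by omega), hB'card])
    obtain ⟨e, heG, heF⟩ : ∃ e ∈ G (k+1), e ∉ F r :=
      not_subset.mp (hnot (k+1) (by omega) (by omega))
    have heB' : e ∉ B' := fun h => heF (hB'F h)
    have hBi : N.Indep (insert e B') := by
      rw [hB'i.insert_indep_iff_of_notMem heB']
      exact ⟨by simp [hE], by rw [hclB']; exact heF⟩
    have hBsub : insert e B' ⊆ F (r+1) := by
      refine insert_subset ?_ (hB'F.trans (hFm r (r+1) (by omega) le_rfl))
      rw [htop]; exact hGm (k+1) (r+1) (by omega) le_rfl heG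
    have hBcard : (insert e B').ncard = r + 1 := by
      rw [Set.ncard_insert_of_notMem heB' (toFinite _), hB'card]
    refine ⟨insert e B', hBsub, hBi, ?_⟩
    intro i hi
    constructor
    · rcases Nat.lt_succ_iff_lt_or_eq.mp (Nat.lt_succ_of_le hi) with hir | rfl
      · have heFi : e ∉ F i := fun h => heF (hFm i r (by omega) (by omega) h)
        rw [insert_inter_of_notMem heFi]
        exact (hB'c i (by omega)).1
      · rw [inter_eq_left.mpr hBsub]; exact hBcard
    · by_cases hik : i ≤ k
      · have heGi : e ∉ G i := fun h => heF (hGsubF i hik h)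
        rw [insert_inter_of_notMem heGi]
        have := (hB'c i (by omega)).2
        rwa [HG i hik] at this
      · have heGi : e ∈ G i := hGm (k+1) i (by omega) hi heG
        rw [insert_inter_of_mem heGi,
          Set.ncard_insert_of_notMem (fun h => heB' h.1) (toFinite _)]
        have hBG : B' ∩ G i = B' ∩ (G i ∩ F r) := by
          rw [inter_comm (G i) (F r), ← inter_assoc, inter_eq_left.mpr hB'F]
        have key : (B' ∩ G i).ncard = i - 1 := by
          by_cases hik1 : i = k + 1
          · subst hik1
            rw [hBG, claim4, ← HG k le_rfl]
            have := (hB'c k (by omega)).2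
            rw [this]
            omega
          · have hH' : H (i-1) = G i ∩ F r := by
              have hi1 : i - 1 + 1 = i := by omega
              rw [Hgt (i-1) (by omega), hi1]
            rw [hBG, ← hH']
            have := (hB'c (i-1) (by omega)).2
            rw [this]
        omega
end helpers

/-- in a finite loopless modular matroid of rank `r`, any two complete
flags of flats admit a common adapted basis `B`, i.e. `|B ∩ F i| = i = |B ∩ G i|`
for all `0 ≤ i ≤ r`. -/
theorem modular_common_adapted_basis {α : Type*} [Fintype α] (N : Matroid α)
    (hE : N.E = Set.univ) (hloopless : ∀ e : α, N.Indep {e})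
    (hmod : IsModularMatroid N) (r : ℕ)
    (F G : ℕ → Set α)
    (hFflat : ∀ i ≤ r, N.IsFlat (F i)) (hGflat : ∀ i ≤ r, N.IsFlat (G i))
    (hF0 : F 0 = ∅) (hG0 : G 0 = ∅)
    (hFr : F r = Set.univ) (hGr : G r = Set.univ)
    (hFmono : ∀ i j, i ≤ j → j ≤ r → F i ⊆ F j)
    (hGmono : ∀ i j, i ≤ j → j ≤ r → G i ⊆ G j)
    (hFrk : ∀ i ≤ r, mrk N (F i) = i) (hGrk : ∀ i ≤ r, mrk N (G i) = i) :
    ∃ B, N.IsBase B ∧ ∀ i ≤ r, (B ∩ F i).ncard = i ∧ (B ∩ G i).ncard = i := by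
  obtain ⟨B, hBsub, hBi, hBc⟩ := aux_flag hE hmod r F G hFflat hGflat hF0 hG0
    (by rw [hFr, hGr]) hFmono hGmono hFrk hGrk
  refine ⟨B, ?_, hBc⟩
  have hBcard : B.ncard = r := by
    have := (hBc r le_rfl).1
    rwa [inter_eq_left.mpr hBsub] at this
  have hcl : N.closure B = F r :=
    mrk_spans hE (hFflat r le_rfl) hBi hBsub (by rw [hFrk r le_rfl, hBcard])
  refine hBi.isBase_of_spanning ?_
  rw [Matroid.spanning_iff_closure_eq (by rw [hE]; exact subset_univ B)]
  rw [hcl, hFr, hE]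
end

section
/- Let M1 and M2 be finite loopless matroids of equal rank on ground sets E1 and E2, and let φ : E1 → E2 be an extension (φ injective and, for every S ⊆ E1, S independent in M1 iff φ(S) independent in M2). Let w : E1 → ℝ satisfy the tropical circuit condition for M1, and define φ_*w : E2 → ℝ by (φ_*w)(e) = sup{ r ∈ ℝ : e ∈ cl_{M2}( φ({ i ∈ E1 : w(i) ≥ r }) ) }. Then φ_*w satisfies the tropical circuit condition for M2, and (φ_*w)(φ(i)) = w(i) for every i ∈ E1; in particular the family of flats cl_{M2}(φ(F^w_r)), r ∈ ℝ, is an antitone filtration of M2 by flats inducing a point of the Bergman fan of M2. -/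
open Set

/-- Every dependent set in a matroid on a finite type contains a circuit. -/
lemma exists_matroidCircuit_subset {β : Type*} [Fintype β] {M : Matroid β} {D : Set β}
    (hD : M.Dep D) : ∃ C ⊆ D, MatroidCircuit M C := by
  have key : ∀ n : ℕ, ∀ D : Set β, D.ncard ≤ n → M.Dep D → ∃ C ⊆ D, MatroidCircuit M C := by
    intro n
    induction n with
    | zero =>
      intro D hcard hD
      rw [Nat.le_zero, Set.ncard_eq_zero (Set.toFinite D)] at hcard
      exact absurd (hcard ▸ hD) M.empty_indep.not_dep
    | succ n ih =>
      intro D hcard hD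
      by_cases h : ∀ D' ⊆ D, M.Dep D' → D' = D
      · exact ⟨D, subset_rfl, hD, h⟩
      · push_neg at h
        obtain ⟨D', hsub, hdep, hne⟩ := h
        have hlt := Set.ncard_lt_ncard (hsub.ssubset_of_ne hne) (Set.toFinite D)
        obtain ⟨C, hCsub, hC⟩ := ih D' (by omega) hdep
        exact ⟨C, hCsub.trans hsub, hC⟩
  exact key D.ncard D le_rfl hD

/-- if `φ : M1 → M2` is an extension of finite loopless matroids of
equal rank and `w` satisfies the tropical circuit condition for `M1`, then the
pushforward `φ_* w`, defined by
`(φ_* w)(e) = sup { r : e ∈ cl_{M2}(φ(F^w_r)) }` with `F^w_r = { i : w i ≥ r }`,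
satisfies the tropical circuit condition for `M2`, and `(φ_* w)(φ i) = w i` for all
`i`. -/
theorem pushforward_of_bergman_point {α β : Type*} [Fintype α] [Fintype β]
    (M1 : Matroid α) (M2 : Matroid β)
    (hE1 : M1.E = Set.univ) (hE2 : M2.E = Set.univ)
    (hloopless1 : ∀ e : α, M1.Indep {e}) (hloopless2 : ∀ e : β, M2.Indep {e})
    (hrank : ∃ B1 B2, M1.IsBase B1 ∧ M2.IsBase B2 ∧ B1.ncard = B2.ncard)
    (φ : α → β) (hφ : Function.Injective φ)
    (hext : ∀ S : Set α, M1.Indep S ↔ M2.Indep (φ '' S))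
    (w : α → ℝ) (hw : TropCircuitCond M1 w) :
    TropCircuitCond M2
        (fun e => sSup {r : ℝ | e ∈ M2.closure (φ '' {i | r ≤ w i})}) ∧
      ∀ i : α, sSup {r : ℝ | φ i ∈ M2.closure (φ '' {j | r ≤ w j})} = w i := by
  classical
  -- antitonicity of the filtration
  have hmono : ∀ {r r' : ℝ}, r ≤ r' →
      M2.closure (φ '' {i | r' ≤ w i}) ⊆ M2.closure (φ '' {i | r ≤ w i}) := by
    intro r r' h
    exact M2.closure_subset_closure (Set.image_mono (fun i hi => h.trans hi))
  -- upper bound on w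
  obtain ⟨m, hm⟩ : ∃ m : ℝ, ∀ i : α, w i ≤ m := Finite.exists_le w
  -- the support sets are bounded above
  have hclemp : ∀ e : β, e ∉ M2.closure (∅ : Set β) := by
    intro e he
    rcases (M2.empty_indep.mem_closure_iff).1 he with h | h
    · have : insert e (∅ : Set β) = {e} := by simp
      rw [this] at h
      exact h.not_indep (hloopless2 e)
    · exact h
  have hbdd : ∀ e : β, BddAbove {r : ℝ | e ∈ M2.closure (φ '' {i | r ≤ w i})} := by
    intro e
    refine ⟨m, fun r hr => ?_⟩
    by_contra h
    push_neg at h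
    have hemp : {i : α | r ≤ w i} = (∅ : Set α) := by
      apply Set.eq_empty_of_forall_notMem
      intro i hi
      have h1 : w i ≤ m := hm i
      have h2 : r ≤ w i := hi
      linarith
    rw [Set.mem_setOf_eq, hemp, Set.image_empty] at hr
    exact hclemp e hr
  -- φ '' B1 is a base of M2, hence φ '' univ spans
  obtain ⟨B1, B2, hB1, hB2, hcard⟩ := hrank
  have himg_indep : M2.Indep (φ '' B1) := (hext B1).1 hB1.indep
  obtain ⟨B, hB, hsub⟩ := himg_indep.exists_isBase_superset
  have heq : φ '' B1 = B := by
    apply Set.eq_of_subset_of_ncard_le hsub ?_ (Set.toFinite B)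
    rw [hB.ncard_eq_ncard_of_isBase hB2, ← hcard, Set.ncard_image_of_injective _ hφ]
  have hbase : M2.IsBase (φ '' B1) := heq ▸ hB
  have hspan : ∀ e : β, e ∈ M2.closure (φ '' (Set.univ : Set α)) := by
    intro e
    rw [hbase.closure_of_superset (Set.image_mono (Set.subset_univ B1)), hE2]
    exact Set.mem_univ e
  -- lower bound: the support sets are nonempty
  obtain ⟨m', hm'⟩ : ∃ m : ℝ, ∀ i : α, -w i ≤ m := Finite.exists_le _
  have hSne : ∀ e : β, -m' ∈ {r : ℝ | e ∈ M2.closure (φ '' {i | r ≤ w i})} := by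
    intro e
    have huniv : {i : α | -m' ≤ w i} = Set.univ := by
      apply Set.eq_univ_of_forall
      intro i
      have := hm' i
      simp only [Set.mem_setOf_eq]
      linarith
    rw [Set.mem_setOf_eq, huniv]
    exact hspan e
  -- membership gives a lower bound on the sup
  have hA : ∀ (e : β) (r : ℝ), e ∈ M2.closure (φ '' {i | r ≤ w i}) →
      r ≤ sSup {r : ℝ | e ∈ M2.closure (φ '' {i | r ≤ w i})} :=
    fun e r h => le_csSup (hbdd e) h
  -- step function structure
  have hstep : ∀ s : ℝ, ∃ t < s, ∀ r, t < r → r ≤ s →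
      {i : α | r ≤ w i} = {i : α | s ≤ w i} := by
    intro s
    set T : Finset ℝ := insert (s - 1) ((Finset.univ.image w).filter (· < s)) with hT
    have hTne : T.Nonempty := ⟨s - 1, Finset.mem_insert_self _ _⟩
    refine ⟨T.max' hTne, ?_, ?_⟩
    · rw [Finset.max'_lt_iff]
      intro b hb
      rcases Finset.mem_insert.1 hb with rfl | hb
      · linarith
      · exact (Finset.mem_filter.1 hb).2
    · intro r htr hrs
      ext i
      simp only [Set.mem_setOf_eq]
      constructor
      · intro hri
        by_contra hs
        push_neg at hs
        have hmemT : w i ∈ T := Finset.mem_insert_of_mem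
          (Finset.mem_filter.2 ⟨Finset.mem_image_of_mem w (Finset.mem_univ i), hs⟩)
        have := Finset.le_max' T _ hmemT
        linarith
      · intro hsi; linarith
  -- the sup is attained
  have hclosed : ∀ e : β,
      e ∈ M2.closure (φ '' {i | sSup {r : ℝ | e ∈ M2.closure (φ '' {i | r ≤ w i})} ≤ w i}) := by
    intro e
    obtain ⟨t, hts, hF⟩ := hstep (sSup {r : ℝ | e ∈ M2.closure (φ '' {i | r ≤ w i})})
    obtain ⟨r, hrS, htr⟩ := exists_lt_of_lt_csSup ⟨_, hSne e⟩ hts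
    have hrs : r ≤ sSup {r : ℝ | e ∈ M2.closure (φ '' {i | r ≤ w i})} :=
      le_csSup (hbdd e) hrS
    rw [← hF r htr hrs]
    exact hrS
  -- Part 2: pushforward restricts to w along φ
  have hpush : ∀ i : α, sSup {r : ℝ | φ i ∈ M2.closure (φ '' {j | r ≤ w j})} = w i := by
    intro i
    have hmem : w i ∈ {r : ℝ | φ i ∈ M2.closure (φ '' {j | r ≤ w j})} := by
      apply M2.subset_closure _ (by rw [hE2]; exact Set.subset_univ _)
      exact ⟨i, Set.mem_setOf_eq ▸ le_rfl, rfl⟩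
    refine le_antisymm (csSup_le ⟨_, hmem⟩ ?_) (le_csSup (hbdd (φ i)) hmem)
    intro r hr
    by_contra hlt
    push_neg at hlt
    obtain ⟨I, hI⟩ := M1.exists_isBasis {j | r ≤ w j} (by rw [hE1]; exact Set.subset_univ _)
    have hIindep := hI.indep
    have hIsub : I ⊆ {j | r ≤ w j} := hI.subset
    have hbasis2 : M2.IsBasis (φ '' I) (φ '' {j | r ≤ w j}) := by
      apply ((hext I).1 hIindep).isBasis_of_forall_insert (Set.image_mono hIsub)
      rintro e ⟨⟨j, hj, rfl⟩, hnotin⟩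
      have hjI : j ∉ I := fun h => hnotin (Set.mem_image_of_mem φ h)
      have hdep1 : M1.Dep (insert j I) := hI.insert_dep ⟨hj, hjI⟩
      rw [← Set.image_insert_eq, Matroid.dep_iff]
      exact ⟨fun hind => hdep1.not_indep ((hext _).2 hind),
        by rw [hE2]; exact Set.subset_univ _⟩
    have hcl : φ i ∈ M2.closure (φ '' I) := by
      rw [hbasis2.closure_eq_closure]; exact hr
    have hiI : i ∉ I := by
      intro h
      have : r ≤ w i := hIsub h
      linarith
    have hIne : φ i ∉ φ '' I := by
      rintro ⟨j, hj, hje⟩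
      exact hiI (hφ hje ▸ hj)
    have hdep2 : M2.Dep (insert (φ i) (φ '' I)) := by
      rcases ((hext I).1 hIindep).mem_closure_iff.1 hcl with h | h
      · exact h
      · exact absurd h hIne
    have hdep1 : M1.Dep (insert i I) := by
      rw [Matroid.dep_iff]
      refine ⟨fun hind => hdep2.not_indep ?_, by rw [hE1]; exact Set.subset_univ _⟩
      have := (hext _).1 hind
      rwa [Set.image_insert_eq] at this
    obtain ⟨C, hCsub, hCcirc⟩ := exists_matroidCircuit_subset hdep1
    have hiC : i ∈ C := by
      by_contra hiC
      have hCI : C ⊆ I := by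
        intro x hx
        rcases hCsub hx with h | h
        · exact absurd (h ▸ hx) hiC
        · exact h
      exact (hIindep.subset hCI).not_dep hCcirc.1
    obtain ⟨x, hxC, y, hyC, hxy, hwxy, hmin⟩ := hw C hCcirc
    have hle : w x ≤ w i := hmin i hiC
    have key : ∀ z ∈ C, z ≠ i → r ≤ w z := by
      intro z hz hzi
      rcases hCsub hz with h | h
      · exact absurd h hzi
      · exact hIsub h
    rcases eq_or_ne x i with rfl | hxI
    · have hyne : y ≠ x := fun h => hxy h.symm
      have := key y hyC hyne
      linarith
    · have := key x hxC hxI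
      linarith
  refine ⟨?_, hpush⟩
  -- Part 1: the tropical circuit condition for the pushforward
  intro C hC
  have hCne : C.Nonempty := by
    rcases C.eq_empty_or_nonempty with rfl | h
    · exact absurd hC.1 M2.empty_indep.not_dep
    · exact h
  obtain ⟨x, hxC, hxmin⟩ := Set.exists_min_image C
    (fun e => sSup {r : ℝ | e ∈ M2.closure (φ '' {i | r ≤ w i})}) (Set.toFinite C) hCne
  have hCne2 : (C \ {x}).Nonempty := by
    by_contra h
    rw [Set.not_nonempty_iff_eq_empty, Set.diff_eq_empty] at h
    have hCx : C = {x} := Set.Subset.antisymm h (Set.singleton_subset_iff.2 hxC)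
    exact (hCx ▸ hC.1).not_indep (hloopless2 x)
  obtain ⟨y, hyC', hymin⟩ := Set.exists_min_image (C \ {x})
    (fun e => sSup {r : ℝ | e ∈ M2.closure (φ '' {i | r ≤ w i})}) (Set.toFinite _) hCne2
  by_cases hxy : sSup {r : ℝ | x ∈ M2.closure (φ '' {i | r ≤ w i})}
      = sSup {r : ℝ | y ∈ M2.closure (φ '' {i | r ≤ w i})}
  · exact ⟨x, hxC, y, hyC'.1, fun h => hyC'.2 (h ▸ Set.mem_singleton x), hxy,
      fun c hc => hxmin c hc⟩
  · exfalso
    have hlt : sSup {r : ℝ | x ∈ M2.closure (φ '' {i | r ≤ w i})}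
        < sSup {r : ℝ | y ∈ M2.closure (φ '' {i | r ≤ w i})} :=
      lt_of_le_of_ne (hxmin y hyC'.1) hxy
    have hsub : C \ {x} ⊆ M2.closure
        (φ '' {i | sSup {r : ℝ | y ∈ M2.closure (φ '' {i | r ≤ w i})} ≤ w i}) := by
      intro c hc
      exact hmono (hymin c hc) (hclosed c)
    have hCindep : M2.Indep (C \ {x}) := by
      by_contra h
      have hdep : M2.Dep (C \ {x}) :=
        Matroid.dep_iff.2 ⟨h, by rw [hE2]; exact Set.subset_univ _⟩
      have heq := hC.2 _ Set.diff_subset hdep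
      have : x ∈ C \ {x} := by rw [heq]; exact hxC
      exact this.2 rfl
    have hxcl : x ∈ M2.closure (C \ {x}) := by
      apply hCindep.mem_closure_iff.2
      left
      rw [Set.insert_diff_singleton, Set.insert_eq_self.2 hxC]
      exact hC.1
    have hx2 : x ∈ M2.closure
        (φ '' {i | sSup {r : ℝ | y ∈ M2.closure (φ '' {i | r ≤ w i})} ≤ w i}) := by
      have h2 := M2.closure_subset_closure hsub hxcl
      rwa [M2.closure_closure] at h2
    have := hA x _ hx2
    linarith
end
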